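/- arXiv:2508.20696 — 4 statements merged into one kernel-verified Lean document; each statement's English description precedes it below -/
import Mathlib

section
/- For all positive integers k and d there exists N = N(k,d) with the following property: for every linear order ≺ on the set [N]^d of d-tuples with entries in {1,…,N}, there exist sets S_1, S_2, …, S_d ⊆ [N], each of size k, such that the product S_1 × S_2 × … × S_d is sorted by layers with respect to ≺. -/
namespace UTD

/-- An `r`-uniform hypergraph on a finite vertex set of naturals. -/
structure RGraph (r : ℕ) where
  verts : Finset ℕ
  edges : Finset (Finset ℕ)
  edges_subset : ∀ e ∈ edges, e ⊆ verts
  edges_card : ∀ e ∈ edges, e.card = r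

/-- `F` is a subgraph of `H`: an injection of `V(F)` into `V(H)` mapping edges to edges. -/
def IsSubgraph {r : ℕ} (F H : RGraph r) : Prop :=
  ∃ φ : ℕ → ℕ, Set.InjOn φ ↑F.verts ∧ (∀ v ∈ F.verts, φ v ∈ H.verts) ∧
    ∀ e ∈ F.edges, e.image φ ∈ H.edges

/-- `H` is `(d, ε)`-dense: every `S ⊆ V(H)` with `|S| ≥ ε|V(H)|` spans at least
`(d - ε) * C(|S|, r)` edges. -/
def IsDense {r : ℕ} (H : RGraph r) (d ε : ℝ) : Prop :=
  ∀ S ⊆ H.verts, ε * H.verts.card ≤ S.card →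
    (d - ε) * (S.card.choose r : ℝ) ≤ ((H.edges.filter (fun e => e ⊆ S)).card : ℝ)

/-- A sequence of `r`-graphs is locally `d`-dense. -/
def LocallyDense {r : ℕ} (H : ℕ → RGraph r) (d : ℝ) : Prop :=
  ∃ ε : ℕ → ℝ, (∀ n, 0 < ε n) ∧
    Filter.Tendsto ε Filter.atTop (nhds 0) ∧
    Filter.Tendsto (fun n => (H n).verts.card) Filter.atTop Filter.atTop ∧
    ∀ n, IsDense (H n) d (ε n)

/-- The role (set of ranks, 1-indexed) that the elements of `p` play within the
set `e`, with respect to the order given by `ord`. -/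
def role (ord : ℕ → ℕ) (e p : Finset ℕ) : Finset ℕ :=
  p.image (fun v => (e.filter (fun w => ord w < ord v)).card + 1)

/-- Twin pair of edges: distinct edges intersecting in exactly two vertices. -/
def IsTwin {r : ℕ} (F : RGraph r) (e f : Finset ℕ) : Prop :=
  e ∈ F.edges ∧ f ∈ F.edges ∧ e ≠ f ∧ (e ∩ f).card = 2

/-- Quasi-linear: every edge `e` has a unique twin, and all other edges meet `e`
in at most one vertex. -/
def QuasiLinear {r : ℕ} (F : RGraph r) : Prop :=
  ∀ e ∈ F.edges, ∃ f ∈ F.edges, f ≠ e ∧ (e ∩ f).card = 2 ∧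
    ∀ f' ∈ F.edges, f' ≠ e → f' ≠ f → (e ∩ f').card ≤ 1

/-- `F` with the vertex order `ord` is consistently ordered. -/
def ConsistentlyOrdered {r : ℕ} (F : RGraph r) (ord : ℕ → ℕ) : Prop :=
  ∀ e f, IsTwin F e f → role ord e (e ∩ f) = role ord f (e ∩ f)

/-- `F` is consistent: some linear order of its vertices makes it consistently ordered. -/
def Consistent {r : ℕ} (F : RGraph r) : Prop :=
  ∃ ord : ℕ → ℕ, Set.InjOn ord ↑F.verts ∧ ConsistentlyOrdered F ord

/-- `p` is the head of the edge `e`: its two smallest vertices w.r.t. `ord`. -/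
def IsHead (ord : ℕ → ℕ) (e p : Finset ℕ) : Prop :=
  p ⊆ e ∧ p.card = 2 ∧ ∀ u ∈ p, ∀ w ∈ e, w ∉ p → ord u < ord w

/-- `p` is the tail of the edge `e`: its two largest vertices w.r.t. `ord`. -/
def IsTail (ord : ℕ → ℕ) (e p : Finset ℕ) : Prop :=
  p ⊆ e ∧ p.card = 2 ∧ ∀ u ∈ p, ∀ w ∈ e, w ∉ p → ord w < ord u

/-- Head-tail-mixing: for every linear order of the vertex set there are edges
`e, f` such that the head of `e` equals the tail of `f`. -/
def HeadTailMixing {r : ℕ} (F : RGraph r) : Prop :=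
  ∀ ord : ℕ → ℕ, Set.InjOn ord ↑F.verts →
    ∃ e ∈ F.edges, ∃ f ∈ F.edges, ∃ p : Finset ℕ, IsHead ord e p ∧ IsTail ord f p

inductive Letter : Type
  | X | Y | Z
  deriving DecidableEq

/-- A descriptive sequence of order `r`: `2r - 2` letters, among which `r - 2`
are `X`, `r - 2` are `Y`, and two are `Z`. -/
def IsDescSeq (r : ℕ) (σ : Fin (2 * r - 2) → Letter) : Prop :=
  (Finset.univ.filter (fun i => σ i = Letter.X)).card = r - 2 ∧
  (Finset.univ.filter (fun i => σ i = Letter.Y)).card = r - 2 ∧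
  (Finset.univ.filter (fun i => σ i = Letter.Z)).card = 2

/-- The descriptive sequence `XX…XZZYY…Y`. -/
def headTailSeq (r : ℕ) : Fin (2 * r - 2) → Letter := fun i =>
  if (i : ℕ) < r - 2 then Letter.X
  else if (i : ℕ) < r then Letter.Z
  else Letter.Y

/-- The role (set of ranks, 1-indexed) played by the positions of the two `Z`s
within the positions carrying letters different from `avoid`. -/
def seqRole (r : ℕ) (σ : Fin (2 * r - 2) → Letter) (avoid : Letter) : Finset ℕ :=
  (Finset.univ.filter (fun i => σ i = Letter.Z)).image
    (fun i => (Finset.univ.filter (fun j => σ j ≠ avoid ∧ j < i)).card + 1)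

/-- A descriptive sequence is consistent if its two `Z`s play the same role among
the `X/Z` positions as among the `Y/Z` positions. -/
def SeqConsistent (r : ℕ) (σ : Fin (2 * r - 2) → Letter) : Prop :=
  seqRole r σ Letter.Y = seqRole r σ Letter.X

def SeqInconsistent (r : ℕ) (σ : Fin (2 * r - 2) → Letter) : Prop :=
  IsDescSeq r σ ∧ ¬ SeqConsistent r σ

/-- The descriptive sequence `σ` describes the pair of edges `{e, f}` under the
vertex order `ord`. -/
def Describes (r : ℕ) (σ : Fin (2 * r - 2) → Letter) (ord : ℕ → ℕ)
    (e f : Finset ℕ) : Prop :=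
  ∃ w : Fin (2 * r - 2) → ℕ,
    (∀ i j : Fin (2 * r - 2), i < j → ord (w i) < ord (w j)) ∧
    (∀ v : ℕ, v ∈ e ∪ f ↔ ∃ i, w i = v) ∧
    (((∀ i, w i ∈ e ↔ σ i ≠ Letter.Y) ∧ (∀ i, w i ∈ f ↔ σ i ≠ Letter.X)) ∨
     ((∀ i, w i ∈ e ↔ σ i ≠ Letter.X) ∧ (∀ i, w i ∈ f ↔ σ i ≠ Letter.Y)))

/-- A quasi-linear `r`-graph admits the descriptive sequence `σ`: there is a
linear order of its vertices in which every twin pair of edges is described by `σ`. -/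
def AdmitsSeq {r : ℕ} (F : RGraph r) (σ : Fin (2 * r - 2) → Letter) : Prop :=
  ∃ ord : ℕ → ℕ, Set.InjOn ord ↑F.verts ∧
    ∀ e f, IsTwin F e f → Describes r σ ord e f

/-- Linear hypergraph: any two distinct edges intersect in at most one vertex. -/
def LinearGraph {r : ℕ} (H : RGraph r) : Prop :=
  ∀ e ∈ H.edges, ∀ f ∈ H.edges, e ≠ f → (e ∩ f).card ≤ 1

/-- Nowhere-empty sequence of `r`-graphs. -/
def NowhereEmpty {r : ℕ} (H : ℕ → RGraph r) : Prop :=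
  ∀ c : ℝ, 0 < c → ∃ n₀ : ℕ, ∀ n ≥ n₀, ∀ S : Fin r → Finset ℕ,
    (∀ i, S i ⊆ (H n).verts) →
    (∀ i j, i ≠ j → Disjoint (S i) (S j)) →
    (∀ i, c * (H n).verts.card ≤ (S i).card) →
    ∃ e ∈ (H n).edges, ∀ i, (e ∩ S i).Nonempty

/-- A `(k, r)`-reduced hypergraph. -/
structure ReducedGraph (k r : ℕ) where
  part : Fin k → Fin k → Finset ℕ
  part_symm : ∀ i j, part i j = part j i
  part_disj : ∀ i j i' j' : Fin k, i < j → i' < j' → (i, j) ≠ (i', j') →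
    Disjoint (part i j) (part i' j')
  edges : Finset (Finset ℕ)
  edges_card : ∀ e ∈ edges, e.card = r.choose 2
  edges_struct : ∀ e ∈ edges, ∃ t : Fin r → Fin k, StrictMono t ∧
    ∀ a b : Fin r, a < b → (e ∩ part (t a) (t b)).card = 1

/-- The constituent `A_{t 0, …, t (r-1)}` of a reduced hypergraph. -/
def constituent {k r : ℕ} (H : ReducedGraph k r) (t : Fin r → Fin k) :
    Finset (Finset ℕ) :=
  H.edges.filter (fun e => ∀ a b : Fin r, a < b → (e ∩ H.part (t a) (t b)).card = 1)

/-- A reduced hypergraph has density at least `d`. -/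
def HasDensity {k r : ℕ} (H : ReducedGraph k r) (d : ℝ) : Prop :=
  ∀ t : Fin r → Fin k, StrictMono t →
    d * ∏ p ∈ Finset.univ.filter (fun p : Fin r × Fin r => p.1 < p.2),
      ((H.part (t p.1) (t p.2)).card : ℝ) ≤ ((constituent H t).card : ℝ)

/-- The `(2r-2)`-tuple of indices `t` admits the descriptive sequence `σ` in the
reduced hypergraph `H`. -/
def TupleAdmits {k r : ℕ} (H : ReducedGraph k r) (σ : Fin (2 * r - 2) → Letter)
    (t : Fin (2 * r - 2) → Fin k) : Prop :=
  ∃ tx ty : Fin r → Fin k, StrictMono tx ∧ StrictMono ty ∧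
    Set.range tx = t '' {i | σ i ≠ Letter.Y} ∧
    Set.range ty = t '' {i | σ i ≠ Letter.X} ∧
    ∃ eX ∈ constituent H tx, ∃ eY ∈ constituent H ty, (eX ∩ eY).card = 1

/-- The uniform Turán density threshold `C(r,2)^(-C(r,2))`. -/
noncomputable def piR (r : ℕ) : ℝ := ((r.choose 2 : ℝ) ^ (r.choose 2))⁻¹


lemma preRamsey (α : Type) [Fintype α] [DecidableEq α] (χ : ℕ → ℕ → α) :
    ∀ (t : ℕ) (Y : Finset ℕ), (Fintype.card α + 1) ^ t ≤ Y.card →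
      ∃ v : Fin t → ℕ, (∀ i, v i ∈ Y) ∧ StrictMono v ∧
        ∃ c : Fin t → α, ∀ i j : Fin t, i < j → χ (v i) (v j) = c i := by
  intro t
  induction t with
  | zero =>
      intro Y _
      exact ⟨Fin.elim0, fun i => i.elim0, fun i => i.elim0,
        Fin.elim0, fun i => i.elim0⟩
  | succ t ih =>
      intro Y hY
      haveI : Nonempty α := ⟨χ 0 0⟩
      have hA : 1 ≤ Fintype.card α := Fintype.card_pos
      have hYne : Y.Nonempty := by
        rw [← Finset.card_pos]
        exact lt_of_lt_of_le (by positivity) hY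
      set a := Y.min' hYne with ha
      have haY : a ∈ Y := Y.min'_mem hYne
      set Y' := Y.erase a with hY'
      have hp : (Fintype.card α + 1) ^ (t + 1)
          = Fintype.card α * (Fintype.card α + 1) ^ t + (Fintype.card α + 1) ^ t := by ring
      have h3 : 1 ≤ (Fintype.card α + 1) ^ t := Nat.one_le_pow _ _ (by omega)
      have hY'card : Fintype.card α * (Fintype.card α + 1) ^ t ≤ Y'.card := by
        have h1 : Y'.card = Y.card - 1 := Finset.card_erase_of_mem haY
        generalize hq : Fintype.card α * (Fintype.card α + 1) ^ t = Q at *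
        omega
      have hpig : ∃ γ : α, (Fintype.card α + 1) ^ t ≤ (Y'.filter (fun y => χ a y = γ)).card := by
        by_contra h
        push_neg at h
        have hsum := Finset.card_eq_sum_card_fiberwise
          (f := fun y => χ a y) (s := Y') (t := Finset.univ) (fun x _ => Finset.mem_univ _)
        have hle : Y'.card ≤ ∑ _γ : α, ((Fintype.card α + 1) ^ t - 1) := by
          rw [hsum]
          refine Finset.sum_le_sum (fun γ _ => ?_)
          show (Y'.filter (fun y => χ a y = γ)).card ≤ _
          have := h γ; omega
        simp only [Finset.sum_const, Finset.card_univ, smul_eq_mul] at hle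
        have hmul : Fintype.card α * ((Fintype.card α + 1) ^ t - 1) + Fintype.card α * 1
            = Fintype.card α * (Fintype.card α + 1) ^ t := by
          rw [← Nat.mul_add]; congr 1; omega
        generalize hq1 : Fintype.card α * ((Fintype.card α + 1) ^ t - 1) = Q1 at *
        generalize hq2 : Fintype.card α * (Fintype.card α + 1) ^ t = Q2 at *
        omega
      obtain ⟨γ, hγ⟩ := hpig
      obtain ⟨v, hvmem, hvmono, c, hc⟩ := ih _ hγ
      have hvY' : ∀ i, v i ∈ Y' := fun i => Finset.mem_of_mem_filter _ (hvmem i)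
      have hva : ∀ i, a < v i := by
        intro i
        have hm := hvY' i
        rw [hY', Finset.mem_erase] at hm
        exact lt_of_le_of_ne (Y.min'_le _ hm.2) (Ne.symm hm.1)
      refine ⟨Fin.cons a v, ?_, ?_, Fin.cons γ c, ?_⟩
      · intro i
        rcases Fin.eq_zero_or_eq_succ i with rfl | ⟨i', rfl⟩
        · simpa using haY
        · simp only [Fin.cons_succ]
          exact Finset.mem_of_mem_erase (hvY' i')
      · intro i j hij
        rcases Fin.eq_zero_or_eq_succ j with rfl | ⟨j', rfl⟩
        · exact absurd hij (by simp)
        rcases Fin.eq_zero_or_eq_succ i with rfl | ⟨i', rfl⟩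
        · simpa using hva j'
        · simp only [Fin.cons_succ]
          exact hvmono (Fin.succ_lt_succ_iff.mp hij)
      · intro i j hij
        rcases Fin.eq_zero_or_eq_succ j with rfl | ⟨j', rfl⟩
        · exact absurd hij (by simp)
        rcases Fin.eq_zero_or_eq_succ i with rfl | ⟨i', rfl⟩
        · simp only [Fin.cons_succ, Fin.cons_zero]
          exact (Finset.mem_filter.mp (hvmem j')).2
        · simp only [Fin.cons_succ]
          exact hc i' j' (Fin.succ_lt_succ_iff.mp hij)

lemma ramsey2 (α : Type) [Fintype α] [DecidableEq α] [Nonempty α] (m : ℕ) :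
    ∃ N : ℕ, ∀ χ : ℕ → ℕ → α, ∃ A : Finset ℕ, A ⊆ Finset.range N ∧ A.card = m ∧
      ∃ γ : α, ∀ a ∈ A, ∀ b ∈ A, a < b → χ a b = γ := by
  classical
  set t := Fintype.card α * m + 1 with ht
  refine ⟨(Fintype.card α + 1) ^ t, ?_⟩
  intro χ
  obtain ⟨v, hvmem, hvmono, c, hc⟩ := preRamsey α χ t (Finset.range ((Fintype.card α + 1) ^ t))
    (by simp)
  have hA : 1 ≤ Fintype.card α := Fintype.card_pos
  have hpig : ∃ γ : α, m ≤ ((Finset.univ : Finset (Fin t)).filter (fun i => c i = γ)).card := by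
    by_contra h
    push_neg at h
    have hsum := Finset.card_eq_sum_card_fiberwise
      (f := fun i => c i) (s := (Finset.univ : Finset (Fin t))) (t := Finset.univ)
      (fun x _ => Finset.mem_univ _)
    rw [Finset.card_univ, Fintype.card_fin] at hsum
    have hle : t ≤ ∑ _γ : α, (m - 1) := by
      rw [hsum]
      refine Finset.sum_le_sum (fun γ _ => ?_)
      show ((Finset.univ : Finset (Fin t)).filter (fun i => c i = γ)).card ≤ _
      have := h γ; omega
    simp only [Finset.sum_const, Finset.card_univ, smul_eq_mul] at hle
    rcases Nat.eq_zero_or_pos m with rfl | hm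
    · simp at hle
    · have hmul : Fintype.card α * (m - 1) + Fintype.card α * 1 = Fintype.card α * m := by
        rw [← Nat.mul_add]; congr 1; omega
      generalize hq1 : Fintype.card α * (m - 1) = Q1 at *
      generalize hq2 : Fintype.card α * m = Q2 at *
      omega
  obtain ⟨γ, hγ⟩ := hpig
  obtain ⟨I, hIsub, hIcard⟩ := Finset.exists_subset_card_eq hγ
  refine ⟨I.image v, ?_, ?_, γ, ?_⟩
  · intro x hx
    obtain ⟨i, _, rfl⟩ := Finset.mem_image.mp hx
    exact hvmem i
  · rw [Finset.card_image_of_injective _ hvmono.injective, hIcard]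
  · intro a ha b hb hab
    obtain ⟨i, hiI, rfl⟩ := Finset.mem_image.mp ha
    obtain ⟨j, hjI, rfl⟩ := Finset.mem_image.mp hb
    have hij : i < j := by
      by_contra hle
      push_neg at hle
      rcases eq_or_lt_of_le hle with h | h
      · exact absurd (h ▸ rfl) (ne_of_lt hab)
      · exact absurd (hvmono h) (by omega)
    rw [hc i j hij]
    exact (Finset.mem_filter.mp (hIsub hiI)).2


lemma prodRamsey : ∀ (d : ℕ) (α : Type) [Fintype α] [DecidableEq α] [Nonempty α] (m : ℕ),
    ∃ N : ℕ, 0 < N ∧ ∀ χ : (Fin d → ℕ × ℕ) → α,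
      ∃ B : Fin d → Finset ℕ, (∀ j, B j ⊆ Finset.range N) ∧ (∀ j, (B j).card = m) ∧
        ∃ γ : α, ∀ b : Fin d → ℕ × ℕ,
          (∀ j, (b j).1 ∈ B j ∧ (b j).2 ∈ B j ∧ (b j).1 < (b j).2) → χ b = γ := by
  intro d
  induction d with
  | zero =>
      intro α _ _ _ m
      refine ⟨1, one_pos, fun χ => ⟨fun i => i.elim0, fun i => i.elim0, fun i => i.elim0,
        χ (fun i => i.elim0), fun b _ => ?_⟩⟩
      congr 1
      funext i
      exact i.elim0
  | succ d ih =>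
      intro α _ _ _ m
      classical
      obtain ⟨N₀, hN₀pos, hPR⟩ := ih α m
      set β := (Fin d → Fin N₀ × Fin N₀) → α with hβ
      obtain ⟨N₁, hram⟩ := ramsey2 β m
      refine ⟨max N₀ N₁, lt_of_lt_of_le hN₀pos (le_max_left _ _), ?_⟩
      intro χ
      -- supercoloring of pairs for the last coordinate
      set χ' : ℕ → ℕ → β := fun a b => fun c =>
        χ (Fin.snoc (fun j => (((c j).1 : ℕ), ((c j).2 : ℕ))) (a, b)) with hχ'
      obtain ⟨A, hAsub, hAcard, f, hf⟩ := hram χ'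
      -- truncation into Fin N₀
      have htr : ∀ n : ℕ, min n (N₀ - 1) < N₀ := fun n => by omega
      set toF : ℕ × ℕ → Fin N₀ × Fin N₀ := fun p =>
        (⟨min p.1 (N₀ - 1), htr _⟩, ⟨min p.2 (N₀ - 1), htr _⟩) with htoF
      obtain ⟨B₀, hB₀sub, hB₀card, γ, hγ⟩ := hPR (fun c => f (fun j => toF (c j)))
      refine ⟨Fin.snoc B₀ A, ?_, ?_, γ, ?_⟩
      · intro j
        rcases Fin.eq_castSucc_or_eq_last j with ⟨j', rfl⟩ | rfl
        · rw [Fin.snoc_castSucc]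
          exact (hB₀sub j').trans (Finset.range_subset_range.mpr (le_max_left _ _))
        · rw [Fin.snoc_last]
          exact hAsub.trans (Finset.range_subset_range.mpr (le_max_right _ _))
      · intro j
        rcases Fin.eq_castSucc_or_eq_last j with ⟨j', rfl⟩ | rfl
        · rw [Fin.snoc_castSucc]; exact hB₀card j'
        · rw [Fin.snoc_last]; exact hAcard
      · intro b hb
        have hlast := hb (Fin.last d)
        rw [Fin.snoc_last] at hlast
        have hinit : ∀ j : Fin d, (Fin.init b j).1 ∈ B₀ j ∧ (Fin.init b j).2 ∈ B₀ j ∧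
            (Fin.init b j).1 < (Fin.init b j).2 := by
          intro j
          have := hb j.castSucc
          rwa [Fin.snoc_castSucc] at this
        have hrange : ∀ j : Fin d, (Fin.init b j).1 < N₀ ∧ (Fin.init b j).2 < N₀ := by
          intro j
          constructor
          · exact Finset.mem_range.mp (hB₀sub j (hinit j).1)
          · exact Finset.mem_range.mp (hB₀sub j (hinit j).2.1)
        have hback : ∀ j : Fin d, ((toF (Fin.init b j)).1 : ℕ) = (Fin.init b j).1 ∧
            ((toF (Fin.init b j)).2 : ℕ) = (Fin.init b j).2 := by
          intro j
          have h1 := (hrange j).1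
          have h2 := (hrange j).2
          constructor <;> simp [htoF] <;> omega
        have harg : (Fin.snoc (fun j => (((toF (Fin.init b j)).1 : ℕ),
            ((toF (Fin.init b j)).2 : ℕ))) ((b (Fin.last d)).1, (b (Fin.last d)).2)
            : Fin (d+1) → ℕ × ℕ) = b := by
          funext j
          rcases Fin.eq_castSucc_or_eq_last j with ⟨j', rfl⟩ | rfl
          · rw [Fin.snoc_castSucc]
            exact Prod.ext ((hback j').1) ((hback j').2)
          · rw [Fin.snoc_last]
        have step1 : χ' (b (Fin.last d)).1 (b (Fin.last d)).2
            (fun j => toF (Fin.init b j)) = χ b := by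
          show χ (Fin.snoc (fun j => (((toF (Fin.init b j)).1 : ℕ),
            ((toF (Fin.init b j)).2 : ℕ))) ((b (Fin.last d)).1, (b (Fin.last d)).2)) = χ b
          rw [harg]
        have step2 : χ' (b (Fin.last d)).1 (b (Fin.last d)).2 = f :=
          hf _ hlast.1 _ hlast.2.1 hlast.2.2
        have step3 : f (fun j => toF (Fin.init b j)) = γ := hγ (Fin.init b) hinit
        rw [← step1, step2, step3]


set_option maxHeartbeats 4000000 in
/-- Fishburn–Graham: for all positive k, d there is N such that every
linear order on `[N]^d` (given by an injection into ℕ) contains a product of d sets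
of size k that is sorted by layers. -/
theorem fishburn_graham (k d : ℕ) (hk : 0 < k) (hd : 0 < d) :
    ∃ N : ℕ, ∀ ord : (Fin d → Fin N) → ℕ, Function.Injective ord →
      ∃ S : Fin d → Finset (Fin N), (∀ i, (S i).card = k) ∧
        ∃ i : Fin d,
          (∀ x y : Fin d → Fin N, (∀ j, x j ∈ S j) → (∀ j, y j ∈ S j) →
            x i < y i → ord x < ord y) ∨
          (∀ x y : Fin d → Fin N, (∀ j, x j ∈ S j) → (∀ j, y j ∈ S j) →
            x i < y i → ord y < ord x) := by
  classical
  set m := max k (d + 2) with hm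
  have hm3 : 3 ≤ m := le_trans (by omega) (le_max_right _ _)
  have hmd : d + 2 ≤ m := le_max_right _ _
  have hkm : k ≤ m := le_max_left _ _
  obtain ⟨N, hNpos, hPR⟩ := prodRamsey d ((Fin d → Bool) → (Fin d → Bool) → Bool) m
  refine ⟨N, ?_⟩
  intro ord hord
  have htr : ∀ n : ℕ, min n (N - 1) < N := fun n => by omega
  set pt : (Fin d → ℕ) → (Fin d → Fin N) := fun x j => ⟨min (x j) (N - 1), htr _⟩ with hpt
  set χ : (Fin d → ℕ × ℕ) → ((Fin d → Bool) → (Fin d → Bool) → Bool) := fun b u v =>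
    decide (ord (pt (fun j => if u j then (b j).2 else (b j).1))
          < ord (pt (fun j => if v j then (b j).2 else (b j).1))) with hχ
  obtain ⟨B, hBsub, hBcard, c, hc⟩ := hPR χ
  set φ : ∀ _j : Fin d, Fin m ↪o ℕ := fun j => (B j).orderEmbOfFin (hBcard j) with hφ
  have hφmem : ∀ j t, φ j t ∈ B j := fun j t => Finset.orderEmbOfFin_mem _ _ _
  have hφN : ∀ j t, φ j t < N := fun j t => Finset.mem_range.mp (hBsub j (hφmem j t))
  set ψ : (Fin d → Fin m) → (Fin d → Fin N) := fun x j => ⟨φ j (x j), hφN _ _⟩ with hψ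
  set ord₂ : (Fin d → Fin m) → ℕ := fun x => ord (ψ x) with hord₂
  have hψinj : Function.Injective ψ := by
    intro x y h
    funext j
    have hval : φ j (x j) = φ j (y j) := congrArg Fin.val (congrFun h j)
    exact (φ j).injective hval
  have hinj₂ : Function.Injective ord₂ := fun x y h => hψinj (hord h)
  -- box homogeneity on the m-grid
  have C2 : ∀ l h : Fin d → Fin m, (∀ j, l j < h j) → ∀ u v : Fin d → Bool,
      decide (ord₂ (fun j => if u j then h j else l j)
            < ord₂ (fun j => if v j then h j else l j)) = c u v := by
    intro l h hlh u v
    have hval := hc (fun j => (φ j (l j), φ j (h j)))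
      (fun j => ⟨hφmem j (l j), hφmem j (h j), (φ j).strictMono (hlh j)⟩)
    have h1 : χ (fun j => (φ j (l j), φ j (h j))) u v = c u v := by rw [hval]
    rw [← h1]
    show _ = decide (ord (pt (fun j => if u j then φ j (h j) else φ j (l j)))
          < ord (pt (fun j => if v j then φ j (h j) else φ j (l j))))
    have e : ∀ w : Fin d → Bool, pt (fun j => if w j then φ j (h j) else φ j (l j))
        = ψ (fun j => if w j then h j else l j) := by
      intro w
      funext j
      apply Fin.ext
      show min (if w j then φ j (h j) else φ j (l j)) (N - 1) = φ j (if w j then h j else l j)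
      cases hw : w j
      · simp only [if_neg, Bool.false_eq_true, if_false]
        exact Nat.min_eq_left (by have := hφN j (l j); omega)
      · simp only [if_true]
        exact Nat.min_eq_left (by have := hφN j (h j); omega)
    rw [e u, e v]
  -- small elements of Fin m
  have h0m : 0 < m := by omega
  have h1m : 1 < m := by omega
  have h2m : 2 < m := by omega
  set f0 : Fin m := ⟨0, h0m⟩ with hf0
  set f1 : Fin m := ⟨1, h1m⟩ with hf1
  set f2 : Fin m := ⟨2, h2m⟩ with hf2
  -- single-coordinate flip lemma
  have L : ∀ (u v : Fin d → Bool) (j₀ : Fin d), u j₀ = v j₀ →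
      c u v = c (Function.update u j₀ (!u j₀)) (Function.update v j₀ (!v j₀)) := by
    intro u v j₀ huv
    set boxl : Bool → Fin m := fun b => if b then f0 else f1 with hboxl
    set boxh : Bool → Fin m := fun b => if b then f1 else f2 with hboxh
    have hbox : ∀ b, boxl b < boxh b := by
      intro b
      cases b <;> simp [hboxl, hboxh, hf0, hf1, hf2, Fin.mk_lt_mk]
    set lb : Bool → Fin d → Fin m := fun b j =>
      if j = j₀ then boxl b else if u j = v j then boxl (u j) else f0 with hlb
    set hb : Bool → Fin d → Fin m := fun b j =>
      if j = j₀ then boxh b else if u j = v j then boxh (u j) else f1 with hhb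
    have hX : ∀ b, (fun j => if Function.update u j₀ b j then hb b j else lb b j)
        = (fun j => if j = j₀ then f1 else if u j = v j then f1 else (if u j then f1 else f0)) := by
      intro b
      funext j
      by_cases hj : j = j₀
      · subst hj
        simp only [Function.update_self, hlb, hhb, if_pos rfl]
        cases b <;> simp [hboxl, hboxh]
      · simp only [Function.update_of_ne hj, hlb, hhb, if_neg hj]
        rcases Bool.eq_false_or_eq_true (u j) with hu | hu <;>
        rcases Bool.eq_false_or_eq_true (v j) with hv | hv <;>
        simp [hu, hv, hboxl, hboxh]
    have hY : ∀ b, (fun j => if Function.update v j₀ b j then hb b j else lb b j)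
        = (fun j => if j = j₀ then f1 else if u j = v j then f1 else (if v j then f1 else f0)) := by
      intro b
      funext j
      by_cases hj : j = j₀
      · subst hj
        simp only [Function.update_self, hlb, hhb, if_pos rfl]
        cases b <;> simp [hboxl, hboxh]
      · simp only [Function.update_of_ne hj, hlb, hhb, if_neg hj]
        rcases Bool.eq_false_or_eq_true (u j) with hu | hu <;>
        rcases Bool.eq_false_or_eq_true (v j) with hv | hv <;>
        simp [hu, hv, hboxl, hboxh]
    have hcc : ∀ b, c (Function.update u j₀ b) (Function.update v j₀ b)
        = decide (ord₂ (fun j => if j = j₀ then f1 else if u j = v j then f1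
              else (if u j then f1 else f0))
          < ord₂ (fun j => if j = j₀ then f1 else if u j = v j then f1
              else (if v j then f1 else f0))) := by
      intro b
      rw [← C2 (lb b) (hb b) (fun j => by
        by_cases hj : j = j₀
        · simp only [hlb, hhb, if_pos hj]; exact hbox b
        · simp only [hlb, hhb, if_neg hj]
          by_cases he : u j = v j
          · rw [if_pos he, if_pos he]; exact hbox (u j)
          · rw [if_neg he, if_neg he]; simp [hf0, hf1, Fin.mk_lt_mk])
        (Function.update u j₀ b) (Function.update v j₀ b)]
      rw [hX b, hY b]
    have h1 := hcc (u j₀)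
    rw [Function.update_eq_self, huv, Function.update_eq_self] at h1
    have h2 := hcc (!(v j₀))
    rw [huv]
    exact h1.trans h2.symm
  -- flipping bits on a set of coordinates where u and v agree
  have LL : ∀ (D : Finset (Fin d)) (u v : Fin d → Bool), (∀ j ∈ D, u j = v j) →
      c u v = c (fun j => if j ∈ D then !u j else u j)
               (fun j => if j ∈ D then !v j else v j) := by
    intro D
    induction D using Finset.induction_on with
    | empty =>
        intro u v _
        simp
    | @insert a D haD ih =>
        intro u v hagree
        have step1 : c u v = c (Function.update u a (!u a)) (Function.update v a (!v a)) :=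
          L u v a (hagree a (Finset.mem_insert_self a D))
        have step2 := ih (Function.update u a (!u a)) (Function.update v a (!v a))
          (fun j hj => by
            have hja : j ≠ a := fun hh => haD (hh ▸ hj)
            rw [Function.update_of_ne hja, Function.update_of_ne hja]
            exact hagree j (Finset.mem_insert_of_mem hj))
        have e1 : ∀ w : Fin d → Bool,
            (fun j => if j ∈ D then !(Function.update w a (!w a)) j
              else (Function.update w a (!w a)) j)
            = (fun j => if j ∈ insert a D then !w j else w j) := by
          intro w
          funext j
          by_cases hja : j = a
          · subst hja
            rw [if_neg haD, Function.update_self, if_pos (Finset.mem_insert_self j D)]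
          · rw [Function.update_of_ne hja]
            by_cases hjD : j ∈ D
            · rw [if_pos hjD, if_pos (Finset.mem_insert_of_mem hjD)]
            · rw [if_neg hjD, if_neg (by simp [hja, hjD])]
        rw [step1, step2, e1 u, e1 v]
  -- the key homogeneity lemma
  set fL : Fin m := ⟨m - 1, by omega⟩ with hfL
  set c' : (Fin d → Ordering) → Bool := fun ε =>
    c (fun j => decide (ε j = Ordering.gt)) (fun j => decide (ε j = Ordering.lt)) with hc'
  have key : ∀ x y : Fin d → Fin m,
      decide (ord₂ x < ord₂ y) = c' (fun j => compare (x j) (y j)) := by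
    intro x y
    set u₀ : Fin d → Bool := fun j =>
      if x j = y j then decide (x j = fL) else decide (y j < x j) with hu₀
    set v₀ : Fin d → Bool := fun j =>
      if x j = y j then decide (x j = fL) else decide (x j < y j) with hv₀
    have hbox : ∀ j : Fin d, ∃ lj hj : Fin m, lj < hj ∧
        (if u₀ j then hj else lj) = x j ∧ (if v₀ j then hj else lj) = y j := by
      intro j
      by_cases hxy : x j = y j
      · by_cases htop : x j = fL
        · have hval : (x j : ℕ) = m - 1 := by rw [htop, hfL]
          have hu : u₀ j = true := by
            rw [hu₀]; simp only; rw [if_pos hxy]; exact decide_eq_true htop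
          have hv : v₀ j = true := by
            rw [hv₀]; simp only; rw [if_pos hxy]; exact decide_eq_true htop
          refine ⟨⟨(x j : ℕ) - 1, by omega⟩, x j,
            by rw [Fin.lt_def]; simp only; omega, ?_, ?_⟩
          · rw [hu, if_pos rfl]
          · rw [hv, if_pos rfl]; exact hxy
        · have hne : (x j : ℕ) ≠ m - 1 := fun hh => htop (by
            apply Fin.ext; rw [hfL]; exact hh)
          have hlt := (x j).isLt
          have hu : u₀ j = false := by
            rw [hu₀]; simp only; rw [if_pos hxy]; exact decide_eq_false htop
          have hv : v₀ j = false := by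
            rw [hv₀]; simp only; rw [if_pos hxy]; exact decide_eq_false htop
          refine ⟨x j, ⟨(x j : ℕ) + 1, by omega⟩,
            by rw [Fin.lt_def]; simp only; omega, ?_, ?_⟩
          · rw [hu, if_neg Bool.false_ne_true]
          · rw [hv, if_neg Bool.false_ne_true]; exact hxy
      · rcases lt_or_gt_of_ne (fun hh => hxy hh) with hlt | hgt
        · have hu : u₀ j = false := by
            rw [hu₀]; simp only; rw [if_neg hxy]
            exact decide_eq_false (not_lt.mpr hlt.le)
          have hv : v₀ j = true := by
            rw [hv₀]; simp only; rw [if_neg hxy]; exact decide_eq_true hlt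
          refine ⟨x j, y j, hlt, ?_, ?_⟩
          · rw [hu, if_neg Bool.false_ne_true]
          · rw [hv, if_pos rfl]
        · have hu : u₀ j = true := by
            rw [hu₀]; simp only; rw [if_neg hxy]; exact decide_eq_true hgt
          have hv : v₀ j = false := by
            rw [hv₀]; simp only; rw [if_neg hxy]
            exact decide_eq_false (not_lt.mpr hgt.le)
          refine ⟨y j, x j, hgt, ?_, ?_⟩
          · rw [hu, if_pos rfl]
          · rw [hv, if_neg Bool.false_ne_true]
    choose l h hlh hx0 hy0 using hbox
    have hx : (fun j => if u₀ j then h j else l j) = x := funext hx0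
    have hy : (fun j => if v₀ j then h j else l j) = y := funext hy0
    have step1 := C2 l h hlh u₀ v₀
    rw [hx, hy] at step1
    set D : Finset (Fin d) :=
      Finset.univ.filter (fun j => x j = y j ∧ x j = fL) with hD
    have step2 := LL D u₀ v₀ (fun j hj => by
      have := (Finset.mem_filter.mp hj).2
      rw [hu₀, hv₀]
      simp only
      rw [if_pos this.1, if_pos this.1])
    have step3 : (fun j => if j ∈ D then !u₀ j else u₀ j)
        = (fun j => decide (compare (x j) (y j) = Ordering.gt)) := by
      funext j
      rw [hu₀]
      simp only
      by_cases hxy : x j = y j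
      · have hcmp : compare (x j) (y j) = Ordering.eq := compare_eq_iff_eq.mpr hxy
        rw [hcmp]
        by_cases htop : x j = fL
        · rw [if_pos (by rw [hD]; simp only [Finset.mem_filter, Finset.mem_univ,
              true_and]; exact ⟨hxy, htop⟩), if_pos hxy]
          simp [decide_eq_true htop]
        · rw [if_neg (by rw [hD]; simp only [Finset.mem_filter, Finset.mem_univ,
              true_and, not_and]; exact fun _ => htop), if_pos hxy]
          simp [decide_eq_false htop]
      · rw [if_neg (by rw [hD]; simp only [Finset.mem_filter, Finset.mem_univ,
            true_and, not_and]; exact fun hh => absurd hh hxy), if_neg hxy]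
        rw [decide_eq_decide]
        exact (compare_gt_iff_gt (a := x j) (b := y j)).symm
    have step4 : (fun j => if j ∈ D then !v₀ j else v₀ j)
        = (fun j => decide (compare (x j) (y j) = Ordering.lt)) := by
      funext j
      rw [hv₀]
      simp only
      by_cases hxy : x j = y j
      · have hcmp : compare (x j) (y j) = Ordering.eq := compare_eq_iff_eq.mpr hxy
        rw [hcmp]
        by_cases htop : x j = fL
        · rw [if_pos (by rw [hD]; simp only [Finset.mem_filter, Finset.mem_univ,
              true_and]; exact ⟨hxy, htop⟩), if_pos hxy]
          simp [decide_eq_true htop]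
        · rw [if_neg (by rw [hD]; simp only [Finset.mem_filter, Finset.mem_univ,
              true_and, not_and]; exact fun _ => htop), if_pos hxy]
          simp [decide_eq_false htop]
      · rw [if_neg (by rw [hD]; simp only [Finset.mem_filter, Finset.mem_univ,
            true_and, not_and]; exact fun hh => absurd hh hxy), if_neg hxy]
        rw [decide_eq_decide]
        exact (compare_lt_iff_lt (a := x j) (b := y j)).symm
    rw [step1, step2, step3, step4, hc']
  -- derived comparison helpers
  have cmpd : ∀ {a b a' b' : Fin m}, compare a b = compare a' b' →
      ((a < b ↔ a' < b') ∧ (b < a ↔ b' < a')) := by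
    intro a b a' b' hcab
    constructor
    · rw [← compare_lt_iff_lt, ← compare_lt_iff_lt, hcab]
    · show b < a ↔ b' < a'
      rw [← compare_gt_iff_gt, ← compare_gt_iff_gt, hcab]
  have cmpc : ∀ {a b a' b' : Fin m}, (a < b ↔ a' < b') → (b < a ↔ b' < a') →
      compare a b = compare a' b' := by
    intro a b a' b' hi1 hi2
    rcases lt_trichotomy a b with hab | hab | hab
    · rw [compare_lt_iff_lt.mpr hab, compare_lt_iff_lt.mpr (hi1.mp hab)]
    · have hab' : a' = b' := le_antisymm
        (not_lt.mp (fun hh => absurd (hi2.mpr hh) (by rw [hab]; exact lt_irrefl b)))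
        (not_lt.mp (fun hh => absurd (hi1.mpr hh) (by rw [hab]; exact lt_irrefl b)))
      rw [compare_eq_iff_eq.mpr hab, compare_eq_iff_eq.mpr hab']
    · rw [compare_gt_iff_gt.mpr hab, compare_gt_iff_gt.mpr (hi2.mp hab)]
  have ceq : ∀ {a b a' b' : Fin m}, a < b → a' < b' → compare a b = compare a' b' :=
    fun h h' => by rw [compare_lt_iff_lt.mpr h, compare_lt_iff_lt.mpr h']
  have cgt : ∀ {a b a' b' : Fin m}, b < a → b' < a' → compare a b = compare a' b' :=
    fun h h' => by rw [compare_gt_iff_gt.mpr h, compare_gt_iff_gt.mpr h']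
  have ceqE : ∀ {a b a' b' : Fin m}, a = b → a' = b' → compare a b = compare a' b' :=
    fun h h' => by rw [compare_eq_iff_eq.mpr h, compare_eq_iff_eq.mpr h']
  have keyIff : ∀ x y x' y' : Fin d → Fin m,
      (∀ j, compare (x j) (y j) = compare (x' j) (y' j)) →
      (ord₂ x < ord₂ y ↔ ord₂ x' < ord₂ y') := by
    intro x y x' y' hpat
    have h1 := key x y
    have h2 := key x' y'
    rw [show (fun j => compare (x j) (y j)) = (fun j => compare (x' j) (y' j))
      from funext hpat] at h1
    exact decide_eq_decide.mp (h1.trans h2.symm)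
  have hf01 : f0 < f1 := by rw [hf0, hf1]; exact Fin.mk_lt_mk.mpr (by omega)
  -- base point, unit vectors, directions
  set z₀ : Fin d → Fin m := fun _ => f0 with hz₀
  set dlt : Fin d → (Fin d → Fin m) := fun j => Function.update z₀ j f1 with hdlt
  set dir : Fin d → Bool := fun j => decide (ord₂ z₀ < ord₂ (dlt j)) with hdir
  have hdlt_same : ∀ j, dlt j j = f1 := fun j => Function.update_self j f1 z₀
  have hdlt_other : ∀ j j', j' ≠ j → dlt j j' = f0 :=
    fun j j' hj' => Function.update_of_ne hj' f1 z₀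
  have hdltne : ∀ j, z₀ ≠ dlt j := by
    intro j hzd
    have := congrFun hzd j
    rw [hdlt_same j] at this
    exact absurd (this ▸ hf01) (lt_irrefl _)
  -- coordinate reversal
  have hrevval : ∀ a : Fin m, m - 1 - (a : ℕ) < m := fun a => by have := a.isLt; omega
  set rev : Fin m → Fin m := fun a => ⟨m - 1 - (a : ℕ), hrevval a⟩ with hrev
  have hrevrev : ∀ a, rev (rev a) = a := by
    intro a
    apply Fin.ext
    show m - 1 - (m - 1 - (a : ℕ)) = (a : ℕ)
    have := a.isLt
    omega
  have hrevlt : ∀ a b : Fin m, a < b ↔ rev b < rev a := by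
    intro a b
    rw [Fin.lt_def, Fin.lt_def]
    show (a : ℕ) < (b : ℕ) ↔ m - 1 - (b : ℕ) < m - 1 - (a : ℕ)
    have := a.isLt
    have := b.isLt
    constructor <;> omega
  set flp : (Fin d → Fin m) → (Fin d → Fin m) :=
    fun x j => if dir j then x j else rev (x j) with hflp
  have hflpflp : ∀ x, flp (flp x) = x := by
    intro x
    funext j
    show (if dir j then (if dir j then x j else rev (x j))
      else rev (if dir j then x j else rev (x j))) = x j
    by_cases hj : dir j = true
    · rw [if_pos hj, if_pos hj]
    · rw [if_neg hj, if_neg hj, hrevrev]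
  set ord₃ : (Fin d → Fin m) → ℕ := fun x => ord₂ (flp x) with hord₃
  have hinj₃ : Function.Injective ord₃ := by
    intro x y hxy
    have h1 : flp x = flp y := hinj₂ hxy
    have h2 := congrArg flp h1
    rwa [hflpflp, hflpflp] at h2
  have keyIff₃ : ∀ x y x' y' : Fin d → Fin m,
      (∀ j, compare (x j) (y j) = compare (x' j) (y' j)) →
      (ord₃ x < ord₃ y ↔ ord₃ x' < ord₃ y') := by
    intro x y x' y' hpat
    apply keyIff
    intro j
    show compare (if dir j then x j else rev (x j)) (if dir j then y j else rev (y j))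
       = compare (if dir j then x' j else rev (x' j)) (if dir j then y' j else rev (y' j))
    by_cases hj : dir j = true
    · simp only [if_pos hj]
      exact hpat j
    · simp only [if_neg hj]
      refine cmpc ?_ ?_
      · exact ((hrevlt (y j) (x j)).symm.trans ((cmpd (hpat j)).2.trans
          (hrevlt (y' j) (x' j))))
      · exact ((hrevlt (x j) (y j)).symm.trans ((cmpd (hpat j)).1.trans
          (hrevlt (x' j) (y' j))))
  -- unit steps increase ord₃
  have hZ : ∀ j : Fin d, ord₃ z₀ < ord₃ (dlt j) := by
    intro j
    by_cases hj : dir j = true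
    · have hBase : ord₂ z₀ < ord₂ (dlt j) := by
        rw [hdir] at hj
        exact of_decide_eq_true hj
      refine (keyIff (flp z₀) (flp (dlt j)) z₀ (dlt j) ?_).mpr hBase
      intro j'
      by_cases hj' : j' = j
      · subst hj'
        show compare (if dir j' then z₀ j' else rev (z₀ j'))
            (if dir j' then dlt j' j' else rev (dlt j' j')) = _
        simp only [if_pos hj]
      · have e : dlt j j' = z₀ j' := hdlt_other j j' hj'
        show compare (if dir j' then z₀ j' else rev (z₀ j'))
            (if dir j' then dlt j j' else rev (dlt j j')) = compare (z₀ j') (dlt j j')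
        rw [e]
        exact ceqE rfl rfl
    · have hBase : ord₂ (dlt j) < ord₂ z₀ := by
        have hne : ord₂ z₀ ≠ ord₂ (dlt j) := fun hh => hdltne j (hinj₂ hh)
        have hle : ¬ (ord₂ z₀ < ord₂ (dlt j)) := by
          intro hh
          rw [hdir] at hj
          exact hj (decide_eq_true hh)
        omega
      refine (keyIff (flp z₀) (flp (dlt j)) (dlt j) z₀ ?_).mpr hBase
      intro j'
      by_cases hj' : j' = j
      · subst hj'
        show compare (if dir j' then z₀ j' else rev (z₀ j'))
            (if dir j' then dlt j' j' else rev (dlt j' j')) = _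
        simp only [if_neg hj]
        rw [hdlt_same]
        refine cgt ?_ ?_
        · show rev f1 < rev f0
          exact (hrevlt f0 f1).mp hf01
        · show f0 < f1
          exact hf01
      · have e : dlt j j' = z₀ j' := hdlt_other j j' hj'
        show compare (if dir j' then z₀ j' else rev (z₀ j'))
            (if dir j' then dlt j j' else rev (dlt j j')) = compare (dlt j j') (z₀ j')
        rw [e]
        exact ceqE rfl rfl
  have unit₃ : ∀ (x y : Fin d → Fin m) (j : Fin d),
      (∀ j', j' ≠ j → x j' = y j') → x j < y j → ord₃ x < ord₃ y := by
    intro x y j hoth hxyj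
    refine (keyIff₃ x y z₀ (dlt j) ?_).mpr (hZ j)
    intro j'
    by_cases hj' : j' = j
    · subst hj'
      exact ceq hxyj (by rw [hdlt_same]; exact hf01)
    · exact ceqE (hoth j' hj') (by rw [hdlt_other j j' hj'])
  -- the tournament of coordinates
  have beats_step : ∀ (i j : Fin d), i ≠ j → ∀ x y : Fin d → Fin m,
      x i < y i → y j < x j → (∀ j', j' ≠ i → j' ≠ j → x j' = y j') →
      (ord₃ x < ord₃ y ↔ ord₃ (dlt j) < ord₃ (dlt i)) := by
    intro i j hij x y hxi hyj hoth
    apply keyIff₃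
    intro j'
    by_cases hji : j' = i
    · rw [hji, hdlt_other j i hij, hdlt_same i]
      exact ceq hxi hf01
    · by_cases hjj : j' = j
      · rw [hjj, hdlt_same j, hdlt_other i j (fun hh => hij hh.symm)]
        exact cgt hyj hf01
      · rw [hdlt_other j j' hjj, hdlt_other i j' hji]
        exact ceqE (hoth j' hji hjj) rfl
  have beats_total : ∀ i j : Fin d, i ≠ j →
      ¬ (ord₃ (dlt j) < ord₃ (dlt i)) → ord₃ (dlt i) < ord₃ (dlt j) := by
    intro i j hij hno
    have hne : ord₃ (dlt i) ≠ ord₃ (dlt j) := by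
      intro hh
      have := congrFun (hinj₃ hh) i
      rw [hdlt_same, hdlt_other j i hij] at this
      exact absurd (this ▸ hf01) (lt_irrefl _)
    omega
  have beats_trans : ∀ i j l : Fin d, i ≠ j → j ≠ l → i ≠ l →
      ord₃ (dlt j) < ord₃ (dlt i) → ord₃ (dlt l) < ord₃ (dlt j) →
      ord₃ (dlt l) < ord₃ (dlt i) := by
    intro i j l hij hjl hil hbij hbjl
    set X : Fin d → Fin m := Function.update (Function.update z₀ j f1) l f1 with hXd
    set Y : Fin d → Fin m := Function.update (Function.update z₀ i f1) l f1 with hYd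
    set Z : Fin d → Fin m := Function.update (Function.update z₀ i f1) j f1 with hZd
    have hni : ∀ p q : Fin d, p ≠ q → (q ≠ p) := fun p q h hh => h hh.symm
    have hXi : X i = f0 := by
      rw [hXd, Function.update_of_ne hil, Function.update_of_ne hij]
    have hXj : X j = f1 := by rw [hXd, Function.update_of_ne hjl, Function.update_self]
    have hXl : X l = f1 := by rw [hXd, Function.update_self]
    have hXo : ∀ j', j' ≠ i → j' ≠ j → j' ≠ l → X j' = f0 := by
      intro j' h1 h2 h3
      rw [hXd, Function.update_of_ne h3, Function.update_of_ne h2]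
    have hYi : Y i = f1 := by rw [hYd, Function.update_of_ne hil, Function.update_self]
    have hYj : Y j = f0 := by
      rw [hYd, Function.update_of_ne hjl, Function.update_of_ne (hni i j hij)]
    have hYl : Y l = f1 := by rw [hYd, Function.update_self]
    have hYo : ∀ j', j' ≠ i → j' ≠ j → j' ≠ l → Y j' = f0 := by
      intro j' h1 h2 h3
      rw [hYd, Function.update_of_ne h3, Function.update_of_ne h1]
    have hZi : Z i = f1 := by rw [hZd, Function.update_of_ne hij, Function.update_self]
    have hZj : Z j = f1 := by rw [hZd, Function.update_self]
    have hZl : Z l = f0 := by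
      rw [hZd, Function.update_of_ne (hni j l hjl), Function.update_of_ne (hni i l hil)]
    have hZo : ∀ j', j' ≠ i → j' ≠ j → j' ≠ l → Z j' = f0 := by
      intro j' h1 h2 h3
      rw [hZd, Function.update_of_ne h2, Function.update_of_ne h1]
    have hXY : ord₃ X < ord₃ Y := by
      refine (beats_step i j hij X Y ?_ ?_ ?_).mpr hbij
      · rw [hXi, hYi]; exact hf01
      · rw [hXj, hYj]; exact hf01
      · intro j' h1 h2
        by_cases h3 : j' = l
        · rw [h3, hXl, hYl]
        · rw [hXo j' h1 h2 h3, hYo j' h1 h2 h3]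
    have hYZ : ord₃ Y < ord₃ Z := by
      refine (beats_step j l hjl Y Z ?_ ?_ ?_).mpr hbjl
      · rw [hYj, hZj]; exact hf01
      · rw [hYl, hZl]; exact hf01
      · intro j' h1 h2
        by_cases h3 : j' = i
        · rw [h3, hYi, hZi]
        · rw [hYo j' h3 h1 h2, hZo j' h3 h1 h2]
    refine (beats_step i l hil X Z ?_ ?_ ?_).mp (lt_trans hXY hYZ)
    · rw [hXi, hZi]; exact hf01
    · rw [hXl, hZl]; exact hf01
    · intro j' h1 h2
      by_cases h3 : j' = j
      · rw [h3, hXj, hZj]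
      · rw [hXo j' h1 h3 h2, hZo j' h1 h3 h2]
  -- a champion coordinate
  haveI : Nonempty (Fin d) := ⟨⟨0, hd⟩⟩
  obtain ⟨istar, _, hmaxsc⟩ := Finset.exists_max_image Finset.univ
    (fun i => (Finset.univ.filter
      (fun j => ord₃ (dlt j) < ord₃ (dlt i) ∧ j ≠ i)).card) Finset.univ_nonempty
  have hchamp : ∀ j : Fin d, j ≠ istar → ord₃ (dlt j) < ord₃ (dlt istar) := by
    intro j hj
    by_contra hno
    have hb : ord₃ (dlt istar) < ord₃ (dlt j) :=
      beats_total istar j (fun hh => hj hh.symm) hno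
    have hsubset : insert istar (Finset.univ.filter
        (fun l => ord₃ (dlt l) < ord₃ (dlt istar) ∧ l ≠ istar))
        ⊆ Finset.univ.filter (fun l => ord₃ (dlt l) < ord₃ (dlt j) ∧ l ≠ j) := by
      intro l hl
      rcases Finset.mem_insert.mp hl with rfl | hl
      · exact Finset.mem_filter.mpr ⟨Finset.mem_univ _, hb, fun hh => hj hh.symm⟩
      · have hl' := (Finset.mem_filter.mp hl).2
        have hlj : l ≠ j := by rintro rfl; exact hno hl'.1
        refine Finset.mem_filter.mpr ⟨Finset.mem_univ _, ?_, hlj⟩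
        exact beats_trans j istar l hj (fun hh => hl'.2 hh.symm)
          (fun hh => hlj hh.symm) hb hl'.1
    have hcard := Finset.card_le_card hsubset
    rw [Finset.card_insert_of_notMem (by simp)] at hcard
    have hmx := hmaxsc j (Finset.mem_univ j)
    omega
  -- bounded value function
  set fv : ℕ → Fin m := fun n => if h : n < m then ⟨n, h⟩ else f0 with hfv
  have hfveq : ∀ (n : ℕ) (h : n < m), fv n = ⟨n, h⟩ := by
    intro n h
    rw [hfv]
    show (if h' : n < m then (⟨n, h'⟩ : Fin m) else f0) = ⟨n, h⟩
    rw [dif_pos h]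
  have hfv0 : fv 0 = f0 := by rw [hfveq 0 h0m, hf0]
  have hfvlt : ∀ a b : ℕ, a < b → b < m → fv a < fv b := by
    intro a b hab hbm
    rw [hfveq a (lt_trans hab hbm), hfveq b hbm]
    exact Fin.mk_lt_mk.mpr hab
  -- increasing chains
  have chain1 : ∀ (J : Finset (Fin d)), istar ∉ J → ∀ b : ℕ, b + J.card + 1 < m →
      ord₃ (fun j => if j = istar then fv b else if j ∈ J then f1 else f0)
        < ord₃ (fun j => if j = istar then fv (b + J.card + 1) else f0) := by
    intro J
    induction J using Finset.induction_on with
    | empty =>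
        intro _ b hb
        apply unit₃ _ _ istar
        · intro j' hj'
          rw [if_neg hj', if_neg hj']
          exact if_neg (Finset.notMem_empty j')
        · rw [if_pos rfl, if_pos rfl]
          exact hfvlt b (b + (∅ : Finset (Fin d)).card + 1) (by omega) hb
    | @insert a J haJ ih =>
        intro hni b hb
        have hais : a ≠ istar := fun hh => hni (hh ▸ Finset.mem_insert_self a J)
        have hisJ : istar ∉ J := fun hh => hni (Finset.mem_insert_of_mem hh)
        have hcard : (insert a J).card = J.card + 1 := Finset.card_insert_of_notMem haJ
        have hb' : (b + 1) + J.card + 1 < m := by rw [hcard] at hb; omega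
        have hstep : ord₃ (fun j => if j = istar then fv b
              else if j ∈ insert a J then f1 else f0)
            < ord₃ (fun j => if j = istar then fv (b+1) else if j ∈ J then f1 else f0) := by
          refine (beats_step istar a (fun hh => hais hh.symm) _ _ ?_ ?_ ?_).mpr
            (hchamp a hais)
          · rw [if_pos rfl, if_pos rfl]
            exact hfvlt b (b+1) (by omega) (by omega)
          · rw [if_neg hais, if_neg hais, if_pos (Finset.mem_insert_self a J), if_neg haJ]
            exact hf01
          · intro j' hji hja
            rw [if_neg hji, if_neg hji]
            by_cases hjJ : j' ∈ J
            · rw [if_pos (Finset.mem_insert_of_mem hjJ), if_pos hjJ]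
            · rw [if_neg (by simp [hja, hjJ]), if_neg hjJ]
        have hrest := ih hisJ (b+1) hb'
        have heq : fv ((b+1) + J.card + 1) = fv (b + (insert a J).card + 1) := by
          rw [hcard]; congr 1; omega
        rw [heq] at hrest
        exact lt_trans hstep hrest
  have chain2 : ∀ (P : Finset (Fin d)), istar ∉ P → ∀ v : Fin m, P.Nonempty →
      ord₃ (fun j => if j = istar then v else f0)
        < ord₃ (fun j => if j = istar then v else if j ∈ P then f1 else f0) := by
    intro P
    induction P using Finset.induction_on with
    | empty =>
        intro _ _ h
        exact absurd h (by simp)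
    | @insert a P haP ih =>
        intro hni v _
        have hais : a ≠ istar := fun hh => hni (hh ▸ Finset.mem_insert_self a P)
        have hisP : istar ∉ P := fun hh => hni (Finset.mem_insert_of_mem hh)
        rcases P.eq_empty_or_nonempty with rfl | hPne
        · apply unit₃ _ _ a
          · intro j' hj'
            by_cases hji : j' = istar
            · rw [if_pos hji, if_pos hji]
            · rw [if_neg hji, if_neg hji, if_neg (by simp [hj'])]
          · rw [if_neg hais, if_neg hais, if_pos (Finset.mem_insert_self a ∅)]
            exact hf01
        · have h1 := ih hisP v hPne
          have h2 : ord₃ (fun j => if j = istar then v else if j ∈ P then f1 else f0)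
              < ord₃ (fun j => if j = istar then v
                  else if j ∈ insert a P then f1 else f0) := by
            apply unit₃ _ _ a
            · intro j' hj'
              by_cases hji : j' = istar
              · rw [if_pos hji, if_pos hji]
              · rw [if_neg hji, if_neg hji]
                by_cases hjP : j' ∈ P
                · rw [if_pos hjP, if_pos (Finset.mem_insert_of_mem hjP)]
                · rw [if_neg hjP, if_neg (by simp [hj', hjP])]
            · rw [if_neg hais, if_neg hais, if_neg haP,
                if_pos (Finset.mem_insert_self a P)]
              exact hf01
          exact lt_trans h1 h2
  -- the champion coordinate sorts ord₃
  have main₃ : ∀ x y : Fin d → Fin m, x istar < y istar → ord₃ x < ord₃ y := by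
    intro x y hxy
    set J : Finset (Fin d) := Finset.univ.filter (fun j => y j < x j) with hJ
    set P : Finset (Fin d) := Finset.univ.filter (fun j => x j < y j ∧ j ≠ istar) with hP
    have hisJ : istar ∉ J := by
      rw [hJ]
      simp only [Finset.mem_filter, Finset.mem_univ, true_and]
      exact not_lt.mpr hxy.le
    have hisP : istar ∉ P := by
      rw [hP]
      simp only [Finset.mem_filter, Finset.mem_univ, true_and, not_and]
      exact fun _ hh => hh rfl
    have hJcard : J.card + 1 < m := by
      have hsub : J ⊆ Finset.univ.erase istar := by
        intro j hjJ
        refine Finset.mem_erase.mpr ⟨?_, Finset.mem_univ _⟩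
        rintro rfl
        exact absurd ((Finset.mem_filter.mp hjJ).2) (not_lt.mpr hxy.le)
      have hcc := Finset.card_le_card hsub
      rw [Finset.card_erase_of_mem (Finset.mem_univ istar), Finset.card_univ,
        Fintype.card_fin] at hcc
      omega
    have h1 := chain1 J hisJ 0 (by omega)
    have h2 : ord₃ (fun j => if j = istar then fv (0 + J.card + 1) else f0)
        ≤ ord₃ (fun j => if j = istar then fv (0 + J.card + 1)
            else if j ∈ P then f1 else f0) := by
      rcases P.eq_empty_or_nonempty with hPe | hPne
      · apply le_of_eq
        congr 1
        funext j
        by_cases hji : j = istar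
        · rw [if_pos hji, if_pos hji]
        · rw [if_neg hji, if_neg hji, hPe, if_neg (Finset.notMem_empty j)]
      · exact (chain2 P hisP _ hPne).le
    refine (keyIff₃ x y _ _ ?_).mpr (lt_of_lt_of_le h1 h2)
    intro j
    by_cases hji : j = istar
    · rw [hji, if_pos rfl, if_pos rfl]
      exact ceq hxy (hfvlt 0 (0 + J.card + 1) (by omega) (by omega))
    · by_cases hjJ : j ∈ J
      · have hyx : y j < x j := (Finset.mem_filter.mp hjJ).2
        have hjP : j ∉ P := fun hh =>
          absurd (Finset.mem_filter.mp hh).2.1 (not_lt.mpr hyx.le)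
        rw [if_neg hji, if_neg hji, if_pos hjJ, if_neg hjP]
        exact cgt hyx hf01
      · by_cases hjP : j ∈ P
        · have hxyj : x j < y j := (Finset.mem_filter.mp hjP).2.1
          rw [if_neg hji, if_neg hji, if_neg hjJ, if_pos hjP]
          exact ceq hxyj hf01
        · have hxyeq : x j = y j := by
            have ha1 : ¬ y j < x j := fun hh =>
              hjJ (Finset.mem_filter.mpr ⟨Finset.mem_univ _, hh⟩)
            have ha2 : ¬ x j < y j := fun hh =>
              hjP (Finset.mem_filter.mpr ⟨Finset.mem_univ _, hh, hji⟩)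
            exact le_antisymm (not_lt.mp ha1) (not_lt.mp ha2)
          rw [if_neg hji, if_neg hji, if_neg hjJ, if_neg hjP]
          exact ceqE hxyeq rfl
  -- translate back to ord₂
  have core : ∀ x₀ y₀ : Fin d → Fin m, x₀ istar < y₀ istar →
      (dir istar = true → ord₂ x₀ < ord₂ y₀) ∧
      (dir istar ≠ true → ord₂ y₀ < ord₂ x₀) := by
    intro x₀ y₀ h
    have e1 : ∀ w : Fin d → Fin m, ord₃ (flp w) = ord₂ w := by
      intro w
      show ord₂ (flp (flp w)) = ord₂ w
      rw [hflpflp]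
    constructor
    · intro hdi
      have h3 : ord₃ (flp x₀) < ord₃ (flp y₀) := by
        apply main₃
        show (if dir istar then x₀ istar else rev (x₀ istar))
          < (if dir istar then y₀ istar else rev (y₀ istar))
        rw [if_pos hdi, if_pos hdi]
        exact h
      rwa [e1, e1] at h3
    · intro hdi
      have h3 : ord₃ (flp y₀) < ord₃ (flp x₀) := by
        apply main₃
        show (if dir istar then y₀ istar else rev (y₀ istar))
          < (if dir istar then x₀ istar else rev (x₀ istar))
        rw [if_neg hdi, if_neg hdi]
        exact (hrevlt _ _).mp h
      rwa [e1, e1] at h3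
  -- final assembly
  refine ⟨fun j => Finset.image
    (fun t : Fin k => (⟨φ j (Fin.castLE hkm t), hφN _ _⟩ : Fin N)) Finset.univ,
    ?_, istar, ?_⟩
  · intro j
    rw [Finset.card_image_of_injective _ (fun t t' htt => Fin.castLE_injective hkm
      ((φ j).injective (congrArg Fin.val htt))), Finset.card_univ, Fintype.card_fin]
  · have hpre : ∀ (x : Fin d → Fin N), (∀ j, x j ∈ Finset.image
        (fun t : Fin k => (⟨φ j (Fin.castLE hkm t), hφN _ _⟩ : Fin N)) Finset.univ) →
        ∃ x₀ : Fin d → Fin m, ψ x₀ = x := by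
      intro x hx
      choose t ht1 ht2 using fun j => Finset.mem_image.mp (hx j)
      refine ⟨fun j => Fin.castLE hkm (t j), funext fun j => ?_⟩
      show (⟨φ j (Fin.castLE hkm (t j)), hφN _ _⟩ : Fin N) = x j
      exact ht2 j
    by_cases hdi : dir istar = true
    · left
      intro x y hxS hyS hlt
      obtain ⟨x₀, rfl⟩ := hpre x hxS
      obtain ⟨y₀, rfl⟩ := hpre y hyS
      have hlt₀ : x₀ istar < y₀ istar := by
        have hv : φ istar (x₀ istar) < φ istar (y₀ istar) := hlt
        exact (φ istar).lt_iff_lt.mp hv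
      exact (core x₀ y₀ hlt₀).1 hdi
    · right
      intro x y hxS hyS hlt
      obtain ⟨x₀, rfl⟩ := hpre x hxS
      obtain ⟨y₀, rfl⟩ := hpre y hyS
      have hlt₀ : x₀ istar < y₀ istar := by
        have hv : φ istar (x₀ istar) < φ istar (y₀ istar) := hlt
        exact (φ istar).lt_iff_lt.mp hv
      exact (core x₀ y₀ hlt₀).2 hdi


end UTD
end

section
/- Let k be a positive integer, let A_1, A_2, …, A_k be pairwise disjoint finite sets and let A be their union. For every linear order ≺ on A there exist sets B_1, …, B_k with B_i ⊆ A_i and |B_i| ≥ |A_i|/k for each i, such that for all i ≠ j there do not exist elements x, z ∈ B_i and y ∈ B_j with x ≺ y ≺ z. -/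
namespace UTD

lemma aux_lemma {α : Type*} [DecidableEq α] {k : ℕ} (ord : α → ℕ) (c : Fin k → ℕ) :
    ∀ (n : ℕ) (s : Finset (Fin k)) (A : Fin k → Finset α), s.card = n →
    (∀ i j, i ≠ j → Disjoint (A i) (A j)) →
    Set.InjOn ord ↑(s.biUnion A) →
    (∀ i ∈ s, 1 ≤ c i) →
    (∀ i ∈ s, s.card * (c i - 1) + 1 ≤ (A i).card) →
    ∃ B : Fin k → Finset α, (∀ i, B i ⊆ A i) ∧ (∀ i ∈ s, c i ≤ (B i).card) ∧
      (∀ i, i ∉ s → B i = ∅) ∧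
      (∀ i ∈ s, ∀ j ∈ s, i ≠ j →
        (∀ x ∈ B i, ∀ y ∈ B j, ord x < ord y) ∨
        (∀ x ∈ B i, ∀ y ∈ B j, ord y < ord x)) := by
  intro n
  induction n with
  | zero =>
    intro s A hs _ _ _ _
    refine ⟨fun _ => ∅, fun _ => Finset.empty_subset _, ?_, fun _ _ => rfl, ?_⟩
    · intro i hi
      exact absurd hi (by simp [Finset.card_eq_zero.mp hs])
    · intro i hi
      exact absurd hi (by simp [Finset.card_eq_zero.mp hs])
  | succ n ih =>
    intro s A hs hdisj hinj hc hcard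
    classical
    -- the predicate: at threshold t some set reaches its quota
    set P : ℕ → Prop := fun t => ∃ i ∈ s, c i ≤ ((A i).filter (fun x => ord x ≤ t)).card with hP
    have hsne : s.Nonempty := Finset.card_pos.mp (by omega)
    obtain ⟨i₁, hi₁⟩ := hsne
    have hPex : ∃ t, P t := by
      refine ⟨(s.biUnion A).sup ord, i₁, hi₁, ?_⟩
      have : (A i₁).filter (fun x => ord x ≤ (s.biUnion A).sup ord) = A i₁ := by
        apply Finset.filter_true_of_mem
        intro x hx
        exact Finset.le_sup (Finset.mem_biUnion.mpr ⟨i₁, hi₁, hx⟩)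
      rw [this]
      have h0 := hcard i₁ hi₁
      have h1 := hc i₁ hi₁
      have h2 : c i₁ - 1 ≤ s.card * (c i₁ - 1) :=
        Nat.le_mul_of_pos_left _ (by omega)
      set m := s.card * (c i₁ - 1) with hm
      omega
    set t₀ := Nat.find hPex with ht₀
    obtain ⟨i₀, hi₀s, hi₀⟩ := Nat.find_spec hPex
    -- there is an element of A i₀ with ord = t₀
    have hex : ∃ x₀ ∈ A i₀, ord x₀ = t₀ := by
      by_cases h0 : t₀ = 0
      · have hpos : 0 < ((A i₀).filter (fun x => ord x ≤ t₀)).card :=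
          lt_of_lt_of_le (hc i₀ hi₀s) hi₀
        obtain ⟨x, hx⟩ := Finset.card_pos.mp hpos
        rw [Finset.mem_filter] at hx
        exact ⟨x, hx.1, by omega⟩
      · have hlt : ¬ P (t₀ - 1) := Nat.find_min hPex (by omega)
        have h1 : ((A i₀).filter (fun x => ord x ≤ t₀ - 1)).card < c i₀ := by
          by_contra h
          exact hlt ⟨i₀, hi₀s, by omega⟩
        have hsub : (A i₀).filter (fun x => ord x ≤ t₀ - 1) ⊆
            (A i₀).filter (fun x => ord x ≤ t₀) :=
          Finset.monotone_filter_right _ (fun x hx => by omega)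
        have hcl : ((A i₀).filter (fun x => ord x ≤ t₀ - 1)).card <
            ((A i₀).filter (fun x => ord x ≤ t₀)).card := lt_of_lt_of_le h1 hi₀
        have hne : (A i₀).filter (fun x => ord x ≤ t₀ - 1) ≠
            (A i₀).filter (fun x => ord x ≤ t₀) := by
          intro h
          rw [h] at hcl
          exact lt_irrefl _ hcl
        obtain ⟨x, hx1, hx2⟩ := Finset.exists_of_ssubset (hsub.ssubset_of_ne hne)
        rw [Finset.mem_filter] at hx1
        refine ⟨x, hx1.1, ?_⟩
        have : ¬ (ord x ≤ t₀ - 1) := fun h => hx2 (Finset.mem_filter.mpr ⟨hx1.1, h⟩)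
        omega
    obtain ⟨x₀, hx₀A, hx₀ord⟩ := hex
    -- no element of A j (j ∈ s, j ≠ i₀) has ord = t₀
    have hnoj : ∀ j ∈ s, j ≠ i₀ → ∀ x ∈ A j, ord x ≠ t₀ := by
      intro j hj hji x hxA hxord
      have hx₀U : x₀ ∈ (s.biUnion A : Finset α) := Finset.mem_biUnion.mpr ⟨i₀, hi₀s, hx₀A⟩
      have hxU : x ∈ (s.biUnion A : Finset α) := Finset.mem_biUnion.mpr ⟨j, hj, hxA⟩
      have hxx : x = x₀ := hinj hxU hx₀U (by rw [hxord, hx₀ord])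
      subst hxx
      exact (Finset.disjoint_left.mp (hdisj j i₀ hji) hxA) hx₀A
    -- for j ≠ i₀ in s: count at t₀ is at most c j - 1
    have hcnt : ∀ j ∈ s, j ≠ i₀ →
        ((A j).filter (fun x => ord x ≤ t₀)).card ≤ c j - 1 := by
      intro j hj hji
      have heq : (A j).filter (fun x => ord x ≤ t₀) =
          (A j).filter (fun x => ord x ≤ t₀ - 1) := by
        apply Finset.filter_congr
        intro x hx
        have := hnoj j hj hji x hx
        omega
      by_cases h0 : t₀ = 0
      · have : (A j).filter (fun x => ord x ≤ t₀) = ∅ := by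
          rw [Finset.filter_eq_empty_iff]
          intro x hx
          have := hnoj j hj hji x hx
          omega
        rw [this]
        simp
      · have hlt : ¬ P (t₀ - 1) := Nat.find_min hPex (by omega)
        have h1 : ((A j).filter (fun x => ord x ≤ t₀ - 1)).card < c j := by
          by_contra h
          exact hlt ⟨j, hj, by omega⟩
        rw [heq]
        omega
    -- define leftover sets and recurse
    set A' : Fin k → Finset α := fun j => (A j).filter (fun x => t₀ < ord x) with hA'
    set s' := s.erase i₀ with hs'
    have hs'card : s'.card = n := by
      rw [hs', Finset.card_erase_of_mem hi₀s, hs]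
      omega
    have hdisj' : ∀ i j, i ≠ j → Disjoint (A' i) (A' j) := fun i j hij =>
      Finset.disjoint_filter_filter (hdisj i j hij)
    have hUsub : (s'.biUnion A' : Finset α) ⊆ s.biUnion A := by
      intro x hx
      rw [Finset.mem_biUnion] at hx ⊢
      obtain ⟨j, hj, hxj⟩ := hx
      exact ⟨j, Finset.mem_of_mem_erase hj, Finset.mem_of_mem_filter x hxj⟩
    have hinj' : Set.InjOn ord ↑(s'.biUnion A') := hinj.mono (by exact_mod_cast hUsub)
    have hc' : ∀ i ∈ s', 1 ≤ c i := fun i hi => hc i (Finset.mem_of_mem_erase hi)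
    have hcard' : ∀ i ∈ s', s'.card * (c i - 1) + 1 ≤ (A' i).card := by
      intro j hj
      have hjs : j ∈ s := Finset.mem_of_mem_erase hj
      have hji : j ≠ i₀ := Finset.ne_of_mem_erase hj
      have h1 := hcnt j hjs hji
      have h2 := hcard j hjs
      have h3 : ((A j).filter (fun x => t₀ < ord x)).card +
          ((A j).filter (fun x => ord x ≤ t₀)).card = (A j).card := by
        rw [add_comm]
        have := Finset.card_filter_add_card_filter_not
          (s := A j) (p := fun x => ord x ≤ t₀)
        simpa using this
      rw [hs'card]
      simp only [hA']
      rw [hs] at h2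
      have h4 : (n + 1) * (c j - 1) = n * (c j - 1) + (c j - 1) := by ring
      rw [h4] at h2
      have h5 := hc j hjs
      set m := n * (c j - 1) with hm
      omega
    obtain ⟨B', hB'sub, hB'card, hB'empty, hB'sep⟩ :=
      ih s' A' hs'card hdisj' hinj' hc' hcard'
    -- define the answer
    refine ⟨fun j => if j = i₀ then (A i₀).filter (fun x => ord x ≤ t₀) else B' j,
      ?_, ?_, ?_, ?_⟩
    · intro j
      by_cases h : j = i₀
      · subst h; simp [Finset.filter_subset]
      · simp only [if_neg h]
        exact (hB'sub j).trans (Finset.filter_subset _ _)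
    · intro j hj
      by_cases h : j = i₀
      · simp only [if_pos h, h]
        exact hi₀
      · simp only [if_neg h]
        exact hB'card j (Finset.mem_erase.mpr ⟨h, hj⟩)
    · intro j hj
      have h : j ≠ i₀ := fun he => hj (he ▸ hi₀s)
      simp only [if_neg h]
      exact hB'empty j (fun hmem => hj (Finset.mem_of_mem_erase hmem))
    · intro i hi j hj hij
      by_cases h1 : i = i₀
      · have h2 : j ≠ i₀ := fun he => hij (h1.trans he.symm)
        left
        intro x hx y hy
        simp only [if_pos h1] at hx
        simp only [if_neg h2] at hy
        have hx' := Finset.mem_filter.mp hx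
        have hy' : y ∈ (A j).filter (fun x => t₀ < ord x) := by
          simpa [hA'] using hB'sub j hy
        have hy'' := Finset.mem_filter.mp hy'
        omega
      · by_cases h2 : j = i₀
        · right
          intro x hx y hy
          simp only [if_neg h1] at hx
          simp only [if_pos h2] at hy
          have hy' := Finset.mem_filter.mp hy
          have hx' : x ∈ (A i).filter (fun w => t₀ < ord w) := by
            simpa [hA'] using hB'sub i hx
          have hx'' := Finset.mem_filter.mp hx'
          omega
        · simp only [if_neg h1, if_neg h2]
          exact hB'sep i (Finset.mem_erase.mpr ⟨h1, hi⟩) j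
            (Finset.mem_erase.mpr ⟨h2, hj⟩) hij

/-- for pairwise disjoint finite sets `A 0, …, A (k-1)` and any linear
order (given by an injection into ℕ) on their union, there are subsets `B i ⊆ A i`
with `|B i| ≥ |A i| / k` spanning pairwise non-interleaving intervals. -/
theorem disjoint_intervals_lemma {α : Type*} [DecidableEq α] (k : ℕ) (hk : 0 < k)
    (A : Fin k → Finset α) (hdisj : ∀ i j, i ≠ j → Disjoint (A i) (A j))
    (ord : α → ℕ) (hord : Set.InjOn ord ↑(Finset.univ.biUnion A)) :
    ∃ B : Fin k → Finset α, (∀ i, B i ⊆ A i) ∧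
      (∀ i, ((A i).card : ℝ) / k ≤ ((B i).card : ℝ)) ∧
      ∀ i j, i ≠ j → ∀ x ∈ B i, ∀ z ∈ B i, ∀ y ∈ B j,
        ¬ (ord x < ord y ∧ ord y < ord z) := by
  classical
  set s : Finset (Fin k) := Finset.univ.filter (fun i => (A i).Nonempty) with hsdef
  set c : Fin k → ℕ := fun i => ((A i).card + k - 1) / k with hcdef
  have hinj : Set.InjOn ord ↑(s.biUnion A) := by
    apply hord.mono
    have : s.biUnion A ⊆ Finset.univ.biUnion A :=
      Finset.biUnion_subset_biUnion_of_subset_left _ (Finset.filter_subset _ _)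
    exact_mod_cast this
  have hc1 : ∀ i ∈ s, 1 ≤ c i := by
    intro i hi
    have hne : (A i).Nonempty := (Finset.mem_filter.mp hi).2
    have ha : 1 ≤ (A i).card := Finset.card_pos.mpr hne
    rw [hcdef]
    rw [Nat.one_le_div_iff hk]
    omega
  have hcard : ∀ i ∈ s, s.card * (c i - 1) + 1 ≤ (A i).card := by
    intro i hi
    have hne : (A i).Nonempty := (Finset.mem_filter.mp hi).2
    have ha : 1 ≤ (A i).card := Finset.card_pos.mpr hne
    have hsk : s.card ≤ k := by
      have := Finset.card_filter_le (Finset.univ : Finset (Fin k))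
        (fun i => (A i).Nonempty)
      simpa using this
    have h1 : c i - 1 = ((A i).card - 1) / k := by
      have he : (A i).card + k - 1 = ((A i).card - 1) + k := by omega
      simp only [hcdef]
      simp only [he, Nat.add_div_right _ hk]
      exact Nat.add_sub_cancel _ _
    have h2 : ((A i).card - 1) / k * k ≤ (A i).card - 1 := Nat.div_mul_le_self _ _
    have h3 : s.card * (c i - 1) ≤ ((A i).card - 1) / k * k := by
      rw [h1, mul_comm]
      exact Nat.mul_le_mul_left _ hsk
    have h4 : s.card * (c i - 1) ≤ (A i).card - 1 := h3.trans h2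
    calc s.card * (c i - 1) + 1 ≤ ((A i).card - 1) + 1 := Nat.add_le_add_right h4 1
      _ = (A i).card := by omega
  obtain ⟨B, hBsub, hBcard, hBempty, hBsep⟩ :=
    aux_lemma ord c s.card s A rfl hdisj hinj hc1 hcard
  refine ⟨B, hBsub, ?_, ?_⟩
  · intro i
    by_cases hi : (A i).Nonempty
    · have his : i ∈ s := Finset.mem_filter.mpr ⟨Finset.mem_univ i, hi⟩
      have hle : c i ≤ (B i).card := hBcard i his
      have hdm := Nat.div_add_mod ((A i).card + k - 1) k
      have hmlt : ((A i).card + k - 1) % k < k := Nat.mod_lt _ hk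
      have ha : 1 ≤ (A i).card := Finset.card_pos.mpr hi
      have hkey : (A i).card ≤ k * c i := by
        rw [hcdef]
        obtain ⟨K, hK⟩ : ∃ K, K = k * (((A i).card + k - 1) / k) := ⟨_, rfl⟩
        rw [← hK]
        rw [← hK] at hdm
        omega
      rw [div_le_iff₀ (by positivity : (0:ℝ) < (k:ℝ))]
      have : (A i).card ≤ (B i).card * k := by
        calc (A i).card ≤ k * c i := hkey
        _ ≤ k * (B i).card := Nat.mul_le_mul_left _ hle
        _ = (B i).card * k := mul_comm _ _
      exact_mod_cast this
    · have : A i = ∅ := Finset.not_nonempty_iff_eq_empty.mp hi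
      rw [this]
      simp
  · intro i j hij x hx z hz y hy ⟨h1, h2⟩
    by_cases his : i ∈ s
    · by_cases hjs : j ∈ s
      · rcases hBsep i his j hjs hij with h | h
        · exact absurd (h z hz y hy) (by omega)
        · exact absurd (h x hx y hy) (by omega)
      · rw [hBempty j hjs] at hy
        exact absurd hy (Finset.notMem_empty y)
    · rw [hBempty i his] at hx
      exact absurd hx (Finset.notMem_empty x)


end UTD
end

section
/- For every integer r ≥ 3 there exists a nowhere-empty sequence of linear r-graphs {H_n}, where each H_n has exactly n vertices. -/
namespace UTD

/-! ### Auxiliary material for Statement 8.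

We construct, for each `n`, a linear `r`-graph on `n` vertices by a greedy
probabilistic (counting) argument: choosing `T ≈ n²/polylog` random `r`-tuples
and keeping those not conflicting with earlier ones yields, for some outcome,
a linear `r`-graph hitting every `r` disjoint vertex sets of size `≥ n/q + 1`,
where `q = q(n) → ∞`. -/

open Finset

/-- Bad list: no element is "good" relative to the list of elements after it
(list head = most recent round). -/
def BadList {C : Type*} (B : C → List C → Prop) : List C → Prop
  | [] => True
  | c :: l => ¬ B c l ∧ BadList B l

lemma badList_not {C : Type*} {B : C → List C → Prop} {l : List C}
    (h : ¬ BadList B l) : ∃ l₁ c l₂, l = l₁ ++ c :: l₂ ∧ B c l₂ := by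
  induction l with
  | nil => exact absurd trivial h
  | cons c l ih =>
    by_cases hc : B c l
    · exact ⟨[], c, l, rfl, hc⟩
    · have : ¬ BadList B l := fun hb => h ⟨hc, hb⟩
      obtain ⟨l₁, c', l₂, rfl, hB⟩ := ih this
      exact ⟨c :: l₁, c', l₂, rfl, hB⟩

open Classical in
/-- Chain-rule counting: if in every round at least `γ` of the choices are good,
then the number of outcome sequences with no good round is at most `(|C|-γ)^T`. -/
lemma badList_count {C : Type*} [Fintype C] (B : C → List C → Prop) (γ : ℕ) :
    ∀ T : ℕ, (∀ l : List C, l.length < T → γ ≤ (univ.filter (fun c => B c l)).card) →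
    ((univ : Finset (Fin T → C)).filter (fun ω => BadList B (List.ofFn ω))).card
      ≤ (Fintype.card C - γ) ^ T := by
  intro T
  induction T with
  | zero =>
    intro _
    simp [BadList, List.ofFn_zero]
  | succ T ih =>
    intro hB
    classical
    set Bad : Finset (Fin T → C) :=
      univ.filter (fun τ : Fin T → C => BadList B (List.ofFn τ)) with hBad
    set t : Finset ((_ : Fin T → C) × C) :=
      Bad.sigma (fun τ => univ.filter (fun c : C => ¬ B c (List.ofFn τ))) with ht
    have key : ∀ ω : Fin (T+1) → C, BadList B (List.ofFn ω) ↔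
        (¬ B (ω 0) (List.ofFn (fun i : Fin T => ω i.succ)) ∧
          BadList B (List.ofFn (fun i : Fin T => ω i.succ))) := by
      intro ω
      rw [List.ofFn_succ]
      exact Iff.rfl
    have hinj : Set.InjOn (fun ω : Fin (T+1) → C =>
        (⟨fun i : Fin T => ω i.succ, ω 0⟩ : (_ : Fin T → C) × C))
        ↑(univ.filter (fun ω : Fin (T+1) → C => BadList B (List.ofFn ω))) := by
      intro ω₁ _ ω₂ _ h
      simp only [Sigma.mk.inj_iff, heq_eq_eq] at h
      funext i
      refine Fin.cases ?_ ?_ i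
      · exact h.2
      · intro j
        exact congrFun h.1 j
    have hmaps : ∀ ω ∈ univ.filter (fun ω : Fin (T+1) → C => BadList B (List.ofFn ω)),
        (⟨fun i : Fin T => ω i.succ, ω 0⟩ : (_ : Fin T → C) × C) ∈ t := by
      intro ω hω
      rw [mem_filter] at hω
      obtain ⟨hb1, hb2⟩ := (key ω).1 hω.2
      rw [ht, mem_sigma, hBad]
      exact ⟨mem_filter.2 ⟨mem_univ _, hb2⟩, mem_filter.2 ⟨mem_univ _, hb1⟩⟩
    have hcard := Finset.card_le_card_of_injOn _ hmaps hinj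
    have tcard : t.card ≤ (Fintype.card C - γ) ^ T * (Fintype.card C - γ) := by
      rw [ht, Finset.card_sigma]
      have hb : ∀ τ ∈ Bad, (univ.filter (fun c : C => ¬ B c (List.ofFn τ))).card
          ≤ Fintype.card C - γ := by
        intro τ _
        have h1 : γ ≤ (univ.filter (fun c => B c (List.ofFn τ))).card :=
          hB _ (by simp)
        have h2 : (univ.filter (fun c : C => ¬ B c (List.ofFn τ))).card
            = Fintype.card C - (univ.filter (fun c => B c (List.ofFn τ))).card := by
          rw [Finset.filter_not, Finset.card_sdiff_of_subset (Finset.filter_subset _ _)]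
          simp
        omega
      calc ∑ τ ∈ Bad, (univ.filter (fun c : C => ¬ B c (List.ofFn τ))).card
          ≤ ∑ _τ ∈ Bad, (Fintype.card C - γ) := Finset.sum_le_sum hb
        _ = Bad.card * (Fintype.card C - γ) := by rw [Finset.sum_const, smul_eq_mul]
        _ ≤ (Fintype.card C - γ) ^ T * (Fintype.card C - γ) := by
            have := ih (fun l hl => hB l (by omega))
            exact Nat.mul_le_mul_right _ this
    calc (univ.filter (fun ω : Fin (T+1) → C => BadList B (List.ofFn ω))).card
        ≤ t.card := hcard
      _ ≤ (Fintype.card C - γ) ^ T * (Fintype.card C - γ) := tcard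
      _ = (Fintype.card C - γ) ^ (T+1) := by rw [pow_succ]

/-- The vertex set (in ℕ) of a tuple of vertices of `Fin n`. -/
def Fset {r n : ℕ} (c : Fin r → Fin n) : Finset ℕ :=
  Finset.image (fun i => (c i : ℕ)) univ

lemma Fset_subset_range {r n : ℕ} (c : Fin r → Fin n) : Fset c ⊆ Finset.range n := by
  intro v hv
  simp only [Fset, mem_image] at hv
  obtain ⟨i, _, rfl⟩ := hv
  exact mem_range.2 (c i).2

lemma Fset_card_le {r n : ℕ} (c : Fin r → Fin n) : (Fset c).card ≤ r :=
  le_trans (Finset.card_image_le) (by simp)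

open Classical in
/-- Greedy edge extraction: keep a tuple if it has full size and does not conflict
with any earlier (later-in-list) tuple. -/
noncomputable def edgesOf {r n : ℕ} : List (Fin r → Fin n) → Finset (Finset ℕ)
  | [] => ∅
  | c :: l => edgesOf l ∪
      (if (Fset c).card = r ∧ ∀ d ∈ l, ((Fset d) ∩ (Fset c)).card ≤ 1
        then {Fset c} else ∅)

lemma edgesOf_sub {r n : ℕ} : ∀ l : List (Fin r → Fin n), ∀ e ∈ edgesOf l,
    ∃ d ∈ l, e = Fset d := by
  intro l
  induction l with
  | nil => simp [edgesOf]
  | cons c l ih =>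
    intro e he
    rw [edgesOf, mem_union] at he
    rcases he with he | he
    · obtain ⟨d, hd, rfl⟩ := ih e he
      exact ⟨d, List.mem_cons_of_mem _ hd, rfl⟩
    · split_ifs at he with hcond
      · rw [mem_singleton] at he
        exact ⟨c, List.mem_cons_self, he⟩
      · simp at he

lemma edgesOf_spec {r n : ℕ} : ∀ l : List (Fin r → Fin n), ∀ e ∈ edgesOf l,
    e ⊆ Finset.range n ∧ e.card = r := by
  intro l
  induction l with
  | nil => simp [edgesOf]
  | cons c l ih =>
    intro e he
    rw [edgesOf, mem_union] at he
    rcases he with he | he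
    · exact ih e he
    · split_ifs at he with hcond
      · rw [mem_singleton] at he
        subst he
        exact ⟨Fset_subset_range c, hcond.1⟩
      · simp at he

lemma edgesOf_linear {r n : ℕ} : ∀ l : List (Fin r → Fin n), ∀ e ∈ edgesOf l,
    ∀ f ∈ edgesOf l, e ≠ f → (e ∩ f).card ≤ 1 := by
  intro l
  induction l with
  | nil => simp [edgesOf]
  | cons c l ih =>
    intro e he f hf hef
    rw [edgesOf, mem_union] at he hf
    rcases he with he | he <;> rcases hf with hf | hf
    · exact ih e he f hf hef
    · split_ifs at hf with hcond
      · rw [mem_singleton] at hf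
        subst hf
        obtain ⟨d, hd, rfl⟩ := edgesOf_sub l e he
        exact hcond.2 d hd
      · simp at hf
    · split_ifs at he with hcond
      · rw [mem_singleton] at he
        subst he
        obtain ⟨d, hd, rfl⟩ := edgesOf_sub l f hf
        rw [Finset.inter_comm]
        exact hcond.2 d hd
      · simp at he
    · split_ifs at he with hcond
      · rw [mem_singleton] at he
        split_ifs at hf
        rw [mem_singleton] at hf
        exact absurd (he.trans hf.symm) hef
      · simp at he

lemma edgesOf_prefix {r n : ℕ} (l₁ : List (Fin r → Fin n)) (l₂ : List (Fin r → Fin n)) :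
    edgesOf l₂ ⊆ edgesOf (l₁ ++ l₂) := by
  induction l₁ with
  | nil => simp
  | cons c l₁ ih =>
    refine ih.trans ?_
    rw [List.cons_append, edgesOf]
    exact Finset.subset_union_left

lemma mem_edgesOf_split {r n : ℕ} (l₁ l₂ : List (Fin r → Fin n)) (c : Fin r → Fin n)
    (h1 : (Fset c).card = r) (h2 : ∀ d ∈ l₂, ((Fset d) ∩ (Fset c)).card ≤ 1) :
    Fset c ∈ edgesOf (l₁ ++ c :: l₂) := by
  refine edgesOf_prefix l₁ _ ?_
  rw [edgesOf, if_pos ⟨h1, h2⟩]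
  exact mem_union_right _ (mem_singleton_self _)

/-- A tuple is good w.r.t. sets `S` and earlier tuples `l`: transversal and conflict-free. -/
def Bpred {r n : ℕ} (S : Fin r → Finset (Fin n)) (c : Fin r → Fin n)
    (l : List (Fin r → Fin n)) : Prop :=
  (∀ i, c i ∈ S i) ∧ ∀ d ∈ l, ((Fset d) ∩ (Fset c)).card ≤ 1

open Classical in
/-- The number of tuples conflicting with a fixed tuple `d` is at most `r⁴ n^(r-2)`. -/
lemma conf_count {r n : ℕ} (hr : 2 ≤ r) (d : Fin r → Fin n) :
    ((univ : Finset (Fin r → Fin n)).filter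
      (fun c => 2 ≤ ((Fset d) ∩ (Fset c)).card)).card ≤ r^4 * n^(r-2) := by
  classical
  set A : Finset (Fin n) := univ.filter (fun v : Fin n => (v : ℕ) ∈ Fset d) with hA
  have hAcard : A.card ≤ r := by
    have : A.card ≤ (Fset d).card := by
      refine Finset.card_le_card_of_injOn (fun v => (v : ℕ)) ?_ ?_
      · intro v hv; rw [hA, mem_coe, mem_filter] at hv; exact hv.2
      · intro a _ b _ h; exact Fin.val_injective h
    exact this.trans (Fset_card_le d)
  have hsub : (univ : Finset (Fin r → Fin n)).filter
      (fun c => 2 ≤ ((Fset d) ∩ (Fset c)).card) ⊆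
      (univ : Finset (Fin r)).offDiag.biUnion
        (fun p => univ.filter (fun c : Fin r → Fin n => c p.1 ∈ A ∧ c p.2 ∈ A)) := by
    intro c hc
    rw [mem_filter] at hc
    obtain ⟨u, hu, v, hv, huv⟩ := Finset.one_lt_card.1 hc.2
    rw [mem_inter] at hu hv
    have hu2 := hu.2
    have hv2 := hv.2
    simp only [Fset, mem_image, mem_univ, true_and] at hu2 hv2
    obtain ⟨i, rfl⟩ := hu2
    obtain ⟨j, rfl⟩ := hv2
    have hij : i ≠ j := fun h => huv (by rw [h])
    refine mem_biUnion.2 ⟨(i, j), Finset.mem_offDiag.2 ⟨mem_univ _, mem_univ _, hij⟩, ?_⟩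
    rw [mem_filter]
    exact ⟨mem_univ _, mem_filter.2 ⟨mem_univ _, hu.1⟩, mem_filter.2 ⟨mem_univ _, hv.1⟩⟩
  refine (Finset.card_le_card hsub).trans ?_
  refine (Finset.card_biUnion_le).trans ?_
  have hpair : ∀ p ∈ (univ : Finset (Fin r)).offDiag,
      ((univ : Finset (Fin r → Fin n)).filter
        (fun c => c p.1 ∈ A ∧ c p.2 ∈ A)).card ≤ r^2 * n^(r-2) := by
    rintro ⟨i, j⟩ hp
    have hij : i ≠ j := (Finset.mem_offDiag.1 hp).2.2
    set F : Fin r → Finset (Fin n) :=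
      fun s => if s = i then A else if s = j then A else univ with hF
    have hsub2 : (univ : Finset (Fin r → Fin n)).filter
        (fun c => c i ∈ A ∧ c j ∈ A) ⊆ Fintype.piFinset F := by
      intro c hc
      rw [mem_filter] at hc
      rw [Fintype.mem_piFinset]
      intro s
      by_cases h1 : s = i
      · subst h1; simp only [hF, if_pos rfl]; exact hc.2.1
      · by_cases h2 : s = j
        · subst h2; simp only [hF, if_neg h1, if_pos rfl]; exact hc.2.2
        · simp only [hF, if_neg h1, if_neg h2]; exact mem_univ _
    refine (Finset.card_le_card hsub2).trans ?_
    rw [Fintype.card_piFinset]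
    have hi : i ∈ (univ : Finset (Fin r)) := mem_univ _
    rw [← Finset.mul_prod_erase _ _ hi]
    have hj : j ∈ (univ : Finset (Fin r)).erase i := mem_erase.2 ⟨hij.symm, mem_univ _⟩
    rw [← Finset.mul_prod_erase _ _ hj]
    have h1 : (F i).card = A.card := by simp only [hF, if_pos rfl]
    have h2 : (F j).card = A.card := by
      simp [hF, Ne.symm hij]
    have h3 : ∏ s ∈ (((univ : Finset (Fin r)).erase i).erase j), (F s).card ≤ n^(r-2) := by
      have hcard : (((univ : Finset (Fin r)).erase i).erase j).card = r - 2 := by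
        rw [Finset.card_erase_of_mem hj, Finset.card_erase_of_mem hi]
        simp only [Finset.card_univ, Fintype.card_fin]
        omega
      rw [← hcard]
      refine Finset.prod_le_pow_card _ _ _ ?_
      intro s _
      exact (Finset.card_le_univ _).trans (by simp)
    calc (F i).card * ((F j).card *
          ∏ s ∈ (((univ : Finset (Fin r)).erase i).erase j), (F s).card)
        ≤ r * (r * n^(r-2)) := by
          rw [h1, h2]
          exact Nat.mul_le_mul hAcard (Nat.mul_le_mul hAcard h3)
      _ = r^2 * n^(r-2) := by ring
  calc ∑ p ∈ (univ : Finset (Fin r)).offDiag,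
        ((univ : Finset (Fin r → Fin n)).filter
          (fun c => c p.1 ∈ A ∧ c p.2 ∈ A)).card
      ≤ ∑ _p ∈ (univ : Finset (Fin r)).offDiag, r^2 * n^(r-2) :=
        Finset.sum_le_sum hpair
    _ = ((univ : Finset (Fin r)).offDiag).card * (r^2 * n^(r-2)) := by
        rw [Finset.sum_const, smul_eq_mul]
    _ ≤ r^2 * (r^2 * n^(r-2)) := by
        refine Nat.mul_le_mul_right _ ?_
        rw [Finset.offDiag_card]
        simp only [Finset.card_univ, Fintype.card_fin]
        rw [pow_two]
        omega
    _ = r^4 * n^(r-2) := by ring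

open Classical in
/-- Lower bound for the number of good tuples in one round. -/
lemma round_bound {r n : ℕ} (hr : 2 ≤ r) (S : Fin r → Finset (Fin n)) (k T : ℕ)
    (hS : ∀ i, k ≤ (S i).card) (l : List (Fin r → Fin n)) (hl : l.length ≤ T) :
    k^r - T * (r^4 * n^(r-2)) ≤
      ((univ : Finset (Fin r → Fin n)).filter (fun c => Bpred S c l)).card := by
  classical
  set A : Finset (Fin r → Fin n) := Fintype.piFinset S with hA
  have hAcard : k^r ≤ A.card := by
    rw [hA, Fintype.card_piFinset]
    calc k^r = ∏ _i : Fin r, k := by rw [Finset.prod_const, Finset.card_univ]; simp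
      _ ≤ ∏ i : Fin r, (S i).card := Finset.prod_le_prod' (fun i _ => hS i)
  set D : Finset (Fin r → Fin n) := l.toFinset.biUnion
      (fun d => univ.filter (fun c => 2 ≤ ((Fset d) ∩ (Fset c)).card)) with hD
  have hDcard : D.card ≤ T * (r^4 * n^(r-2)) := by
    refine (Finset.card_biUnion_le).trans ?_
    calc ∑ d ∈ l.toFinset, ((univ : Finset (Fin r → Fin n)).filter
          (fun c => 2 ≤ ((Fset d) ∩ (Fset c)).card)).card
        ≤ ∑ _d ∈ l.toFinset, r^4 * n^(r-2) :=
          Finset.sum_le_sum (fun d _ => conf_count hr d)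
      _ = l.toFinset.card * (r^4 * n^(r-2)) := by rw [Finset.sum_const, smul_eq_mul]
      _ ≤ T * (r^4 * n^(r-2)) :=
          Nat.mul_le_mul_right _ (l.toFinset_card_le.trans hl)
  have hsub : A \ D ⊆ (univ : Finset (Fin r → Fin n)).filter (fun c => Bpred S c l) := by
    intro c hc
    rw [Finset.mem_sdiff] at hc
    rw [mem_filter]
    refine ⟨mem_univ _, ?_, ?_⟩
    · intro i
      exact (Fintype.mem_piFinset.1 hc.1) i
    · intro d hd
      by_contra hcon
      exact hc.2 (mem_biUnion.2 ⟨d, List.mem_toFinset.2 hd,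
        mem_filter.2 ⟨mem_univ _, by omega⟩⟩)
  have h1 : A.card ≤ (A \ D).card + D.card := Finset.card_le_card_sdiff_add_card
  have h2 : (A \ D).card ≤ ((univ : Finset (Fin r → Fin n)).filter
      (fun c => Bpred S c l)).card := Finset.card_le_card hsub
  omega

/-- Slowly growing parameter `q = q(n) ≈ n^(1/(7r))`. -/
def qpar (r n : ℕ) : ℕ := Nat.findGreatest (fun q => q ^ (7*r) ≤ n) n
/-- Density threshold parameter: sets of size ≥ `kpar` are hit. -/
def kpar (r n : ℕ) : ℕ := n / qpar r n + 1
/-- Number of rounds. -/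
def Tpar (r n : ℕ) : ℕ := 2 * (qpar r n)^r * r * n

lemma qpar_spec (r n : ℕ) (hr : 1 ≤ r) : (qpar r n) ^ (7*r) ≤ n := by
  refine Nat.findGreatest_spec (P := fun q => q ^ (7*r) ≤ n) (Nat.zero_le n) ?_
  show (0:ℕ) ^ (7*r) ≤ n
  rw [Nat.zero_pow (by omega)]
  exact Nat.zero_le n

lemma qpar_ge (r n B : ℕ) (hB : B ^ (7*r) ≤ n) (hr : 1 ≤ r) (hB1 : 1 ≤ B) :
    B ≤ qpar r n := by
  refine Nat.le_findGreatest ?_ hB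
  calc B = B^1 := (pow_one B).symm
    _ ≤ B^(7*r) := Nat.pow_le_pow_right hB1 (by omega)
    _ ≤ n := hB

lemma qpar_two (r n : ℕ) (hr : 1 ≤ r) (hn : 2^(7*r) ≤ n) : 2 ≤ qpar r n :=
  qpar_ge r n 2 hn hr (by norm_num)

lemma four_r5_le (r : ℕ) (hr : 3 ≤ r) : 4 * r^5 ≤ 2^(5*r) := by
  induction r with
  | zero => omega
  | succ r ih =>
    rcases Nat.lt_or_ge r 3 with h | h
    · interval_cases r <;> norm_num at hr <;> norm_num
    · have ih' := ih h
      have h1 : 4 * (r+1)^5 ≤ 32 * (4 * r^5) := by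
        have h2 : r + 1 ≤ 2*r := by omega
        calc 4 * (r+1)^5 ≤ 4 * (2*r)^5 :=
              Nat.mul_le_mul_left _ (Nat.pow_le_pow_left h2 5)
          _ = 32 * (4 * r^5) := by ring
      calc 4 * (r+1)^5 ≤ 32 * (4 * r^5) := h1
        _ ≤ 32 * 2^(5*r) := by omega
        _ = 2^(5*(r+1)) := by rw [Nat.mul_succ, pow_add]; ring

lemma key_ineqs (r n : ℕ) (hr : 3 ≤ r) (hn : 2^(7*r) ≤ n) :
    let q := qpar r n; let k := kpar r n; let T := Tpar r n
    let M := T * (r^4 * n^(r-2)); let γ := k^r - M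
    2 ≤ q ∧ γ ≤ n^r ∧ n^r ≤ 2 * q^r * γ := by
  intro q k T M γ
  have hr1 : 1 ≤ r := by omega
  have hq2 : 2 ≤ q := qpar_two r n hr1 hn
  have hq7 : q ^ (7*r) ≤ n := qpar_spec r n hr1
  have hn2 : 2 ≤ n := le_trans (by calc (2:ℕ) = 2^1 := rfl
    _ ≤ 2^(7*r) := Nat.pow_le_pow_right (by norm_num) (by omega)) hn
  have hA : 2 * (M * q^r) ≤ n^r := by
    have en : n^(r-1) = n * n^(r-2) := by
      rw [show r-1 = (r-2)+1 by omega, pow_succ']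
    have eq2 : q^(2*r) = q^r * q^r := by rw [two_mul, pow_add]
    have e1 : 2 * (M * q^r) = (4 * r^5 * q^(2*r)) * n^(r-1) := by
      show 2 * ((2 * q^r * r * n) * (r^4 * n^(r-2)) * q^r) = _
      rw [en, eq2]
      ring
    rw [e1]
    have h45 : 4 * r^5 * q^(2*r) ≤ n := by
      calc 4 * r^5 * q^(2*r) ≤ 2^(5*r) * q^(2*r) :=
            Nat.mul_le_mul_right _ (four_r5_le r hr)
        _ ≤ q^(5*r) * q^(2*r) :=
            Nat.mul_le_mul_right _ (Nat.pow_le_pow_left hq2 _)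
        _ = q^(7*r) := by rw [← pow_add]; congr 1; ring
        _ ≤ n := hq7
    calc (4 * r^5 * q^(2*r)) * n^(r-1) ≤ n * n^(r-1) := Nat.mul_le_mul_right _ h45
      _ = n^r := by rw [← pow_succ']; congr 1; omega
  have hkq : n ≤ k * q := by
    have h1 := Nat.div_add_mod n q
    have h2 : n % q < q := Nat.mod_lt _ (by omega)
    calc n = q * (n/q) + n % q := h1.symm
      _ ≤ q * (n/q) + q := by omega
      _ = (n/q + 1) * q := by ring
  have hB : n^r ≤ k^r * q^r := by
    calc n^r ≤ (k*q)^r := Nat.pow_le_pow_left hkq _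
      _ = k^r * q^r := mul_pow _ _ _
  have hqr : 0 < q^r := Nat.pow_pos (by omega)
  have hkn : k ≤ n := by
    have h1 : n / q ≤ n / 2 := Nat.div_le_div_left hq2 (by norm_num)
    have h2 : k = n / q + 1 := rfl
    omega
  have hMk : M ≤ k^r := by
    have h1 : M * q^r ≤ k^r * q^r := by
      calc M * q^r ≤ 2 * (M * q^r) := by omega
        _ ≤ n^r := hA
        _ ≤ k^r * q^r := hB
    exact Nat.le_of_mul_le_mul_right h1 hqr
  have e : k^r = γ + M := by
    have h2 : γ = k^r - M := rfl
    omega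
  refine ⟨hq2, ?_, ?_⟩
  · calc γ ≤ k^r := by omega
      _ ≤ n^r := Nat.pow_le_pow_left hkn _
  · have h6 : n^r ≤ γ * q^r + M * q^r := by
      calc n^r ≤ k^r * q^r := hB
        _ = γ * q^r + M * q^r := by rw [e]; ring
    rw [show 2*q^r*γ = 2*(γ*q^r) from by ring]
    set a := γ * q^r with ha
    set b := M * q^r with hb
    omega

/-- Final numeric inequality: union bound beats the failure probability. -/
lemma final_num (n r q T γ : ℕ) (hn : 2 ≤ n) (hr : 3 ≤ r) (hq : 2 ≤ q)
    (hT : T = 2 * q^r * r * n) (hγn : γ ≤ n^r) (hkey : n^r ≤ 2 * q^r * γ) :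
    2^(r*n) * (n^r - γ)^T < (n^r)^T := by
  have hNpos : (0:ℝ) < (n:ℝ)^r := by positivity
  have hQpos : (0:ℝ) < (q:ℝ)^r := by positivity
  set x : ℝ := 1 / (2 * (q:ℝ)^r) with hx
  have hx0 : 0 < x := by positivity
  have hx1 : x ≤ 1 := by
    rw [hx]
    rw [div_le_one (by positivity)]
    have hq1 : (1:ℝ) ≤ (q:ℝ) := by exact_mod_cast (by omega : 1 ≤ q)
    have : (1:ℝ) ≤ (q:ℝ)^r := by
      calc (1:ℝ) = 1^r := (one_pow r).symm
        _ ≤ (q:ℝ)^r := pow_le_pow_left₀ (by norm_num) hq1 r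
    linarith
  have hgx : (n:ℝ)^r * x ≤ (γ:ℝ) := by
    rw [hx]
    rw [mul_one_div, div_le_iff₀ (by positivity)]
    calc ((n:ℝ))^r ≤ 2 * (q:ℝ)^r * (γ:ℝ) := by exact_mod_cast hkey
      _ = (γ:ℝ) * (2 * (q:ℝ)^r) := by ring
  have hsub : ((n^r - γ : ℕ) : ℝ) = (n:ℝ)^r - (γ:ℝ) := by
    have := hγn
    push_cast [Nat.cast_sub this]
    ring
  have hstep : ((n^r - γ : ℕ) : ℝ) ≤ (n:ℝ)^r * (1 - x) := by
    rw [hsub]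
    nlinarith [hgx]
  have hpow : (((n^r - γ : ℕ):ℝ))^T ≤ ((n:ℝ)^r)^T * ((1 - x))^T := by
    rw [← mul_pow]
    refine pow_le_pow_left₀ (by positivity) hstep T
  have hexp : (1 - x)^T ≤ Real.exp (-(x * T)) := by
    calc (1-x)^T ≤ (Real.exp (-x))^T := by
          refine pow_le_pow_left₀ (by linarith) ?_ T
          have := Real.add_one_le_exp (-x)
          linarith
      _ = Real.exp (-x * T) := by
          rw [← Real.exp_nat_mul]
          ring_nf
      _ = Real.exp (-(x * T)) := by ring_nf
  have hxT : x * T = (r*n : ℕ) := by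
    rw [hx, hT]
    push_cast
    field_simp
  have h2e : (2:ℝ)^(r*n) < Real.exp ((r*n : ℕ)) := by
    have h1 : (2:ℝ) < Real.exp 1 := by
      have := Real.exp_one_gt_d9
      linarith
    calc (2:ℝ)^(r*n) < (Real.exp 1)^(r*n) := by
          refine pow_lt_pow_left₀ h1 (by norm_num) ?_
          have : 1 ≤ r*n := by nlinarith
          omega
      _ = Real.exp ((r*n:ℕ)) := by
          rw [← Real.exp_nat_mul]
          ring_nf
  have main : (2:ℝ)^(r*n) * ((n^r - γ : ℕ):ℝ)^T < ((n:ℝ)^r)^T := by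
    calc (2:ℝ)^(r*n) * ((n^r - γ : ℕ):ℝ)^T
        ≤ (2:ℝ)^(r*n) * (((n:ℝ)^r)^T * (1-x)^T) := by
          refine mul_le_mul_of_nonneg_left hpow (by positivity)
      _ ≤ (2:ℝ)^(r*n) * (((n:ℝ)^r)^T * Real.exp (-(x*T))) := by
          refine mul_le_mul_of_nonneg_left ?_ (by positivity)
          exact mul_le_mul_of_nonneg_left hexp (by positivity)
      _ = ((n:ℝ)^r)^T * ((2:ℝ)^(r*n) * Real.exp (-((r*n:ℕ)))) := by
          rw [hxT]; ring
      _ < ((n:ℝ)^r)^T * 1 := by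
          refine mul_lt_mul_of_pos_left ?_ (by positivity)
          rw [Real.exp_neg]
          rw [mul_inv_lt_iff₀' (Real.exp_pos _)]
          calc (2:ℝ)^(r*n) < Real.exp ((r*n:ℕ)) := h2e
            _ = Real.exp ((r*n:ℕ)) * 1 := by ring
      _ = ((n:ℝ)^r)^T := by ring
  rw [show ((n^r - γ : ℕ):ℝ) = ((n:ℝ)^r - (γ:ℝ)) from hsub,
    show ((n:ℝ)^r - (γ:ℝ)) = ((n^r - γ : ℕ):ℝ) from hsub.symm] at main
  exact_mod_cast main

/-- A good list of rounds: for every family of large sets, some round is good. -/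
def GoodL (r n : ℕ) (l : List (Fin r → Fin n)) : Prop :=
  ∀ S : Fin r → Finset (Fin n), (∀ i, kpar r n ≤ (S i).card) →
    ¬ BadList (Bpred S) l

open Classical in
lemma exists_goodL (r n : ℕ) (hr : 3 ≤ r) (hn : 2^(7*r) ≤ n) :
    ∃ l : List (Fin r → Fin n), GoodL r n l := by
  classical
  obtain ⟨hq2, hγn, hkey⟩ := key_ineqs r n hr hn
  set q := qpar r n
  set k := kpar r n
  set T := Tpar r n with hT
  set γ := k^r - T * (r^4 * n^(r-2)) with hγ
  have hn2 : 2 ≤ n := le_trans (by calc (2:ℕ) = 2^1 := rfl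
    _ ≤ 2^(7*r) := Nat.pow_le_pow_right (by norm_num) (by omega)) hn
  by_contra hcon
  push_neg at hcon
  have hbad : ∀ ω : Fin T → (Fin r → Fin n), ∃ S : Fin r → Finset (Fin n),
      (∀ i, k ≤ (S i).card) ∧ BadList (Bpred S) (List.ofFn ω) := by
    intro ω
    have := hcon (List.ofFn ω)
    rw [GoodL] at this
    push_neg at this
    exact this
  set 𝒮 : Finset (Fin r → Finset (Fin n)) :=
    univ.filter (fun S : Fin r → Finset (Fin n) => ∀ i, k ≤ (S i).card) with h𝒮
  have hcover : (univ : Finset (Fin T → (Fin r → Fin n))) ⊆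
      𝒮.biUnion (fun S => univ.filter
        (fun ω : Fin T → (Fin r → Fin n) => BadList (Bpred S) (List.ofFn ω))) := by
    intro ω _
    obtain ⟨S, hS1, hS2⟩ := hbad ω
    exact mem_biUnion.2 ⟨S, mem_filter.2 ⟨mem_univ _, hS1⟩,
      mem_filter.2 ⟨mem_univ _, hS2⟩⟩
  have hCcard : Fintype.card (Fin r → Fin n) = n^r := by
    rw [Fintype.card_fun]
    simp
  have hperS : ∀ S ∈ 𝒮, (univ.filter
      (fun ω : Fin T → (Fin r → Fin n) => BadList (Bpred S) (List.ofFn ω))).card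
      ≤ (n^r - γ)^T := by
    intro S hS
    rw [h𝒮, mem_filter] at hS
    have := badList_count (Bpred S) γ T ?_
    · rw [hCcard] at this
      exact this
    · intro l hl
      exact round_bound (by omega) S k T hS.2 l (le_of_lt hl)
  have htotal : (n^r)^T ≤ 2^(r*n) * (n^r - γ)^T := by
    have h1 : (univ : Finset (Fin T → (Fin r → Fin n))).card = (n^r)^T := by
      rw [Finset.card_univ, Fintype.card_fun, hCcard]
      simp
    have h2 := Finset.card_le_card hcover
    have h3 := Finset.card_biUnion_le (s := 𝒮) (t := fun S => univ.filter
      (fun ω : Fin T → (Fin r → Fin n) => BadList (Bpred S) (List.ofFn ω)))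
    have h4 : ∑ S ∈ 𝒮, (univ.filter
        (fun ω : Fin T → (Fin r → Fin n) => BadList (Bpred S) (List.ofFn ω))).card
        ≤ 𝒮.card * (n^r - γ)^T := by
      calc ∑ S ∈ 𝒮, (univ.filter
          (fun ω : Fin T → (Fin r → Fin n) => BadList (Bpred S) (List.ofFn ω))).card
          ≤ ∑ _S ∈ 𝒮, (n^r - γ)^T := Finset.sum_le_sum hperS
        _ = 𝒮.card * (n^r - γ)^T := by rw [Finset.sum_const, smul_eq_mul]
    have h5 : 𝒮.card ≤ 2^(r*n) := by
      calc 𝒮.card ≤ (univ : Finset (Fin r → Finset (Fin n))).card :=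
            Finset.card_le_card (Finset.filter_subset _ _)
        _ = 2^(r*n) := by
            rw [Finset.card_univ, Fintype.card_fun]
            simp [Fintype.card_finset, ← pow_mul, mul_comm]
    calc (n^r)^T = (univ : Finset (Fin T → (Fin r → Fin n))).card := h1.symm
      _ ≤ (𝒮.biUnion _).card := h2
      _ ≤ ∑ S ∈ 𝒮, (univ.filter
          (fun ω : Fin T → (Fin r → Fin n) => BadList (Bpred S) (List.ofFn ω))).card := h3
      _ ≤ 𝒮.card * (n^r - γ)^T := h4
      _ ≤ 2^(r*n) * (n^r - γ)^T := Nat.mul_le_mul_right _ h5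
  have := final_num n r q T γ hn2 hr hq2 rfl hγn hkey
  omega

open Classical in
/-- The hypergraphs of the sequence. -/
noncomputable def Hgraph (r n : ℕ) : RGraph r where
  verts := Finset.range n
  edges := if h : ∃ l : List (Fin r → Fin n), GoodL r n l
    then edgesOf h.choose else ∅
  edges_subset := by
    intro e he
    split_ifs at he with h
    · exact (edgesOf_spec _ e he).1
    · simp at he
  edges_card := by
    intro e he
    split_ifs at he with h
    · exact (edgesOf_spec _ e he).2
    · simp at he

open Classical in
lemma Hgraph_linear (r n : ℕ) : LinearGraph (Hgraph r n) := by
  intro e he f hf hef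
  show (e ∩ f).card ≤ 1
  have hedges : (Hgraph r n).edges = if h : ∃ l : List (Fin r → Fin n), GoodL r n l
    then edgesOf h.choose else ∅ := rfl
  rw [hedges] at he hf
  split_ifs at he hf with h
  · exact edgesOf_linear _ e he f hf hef
  · simp at he

/-- for every r ≥ 3 there is a nowhere-empty sequence of linear
r-graphs, where `H n` has exactly n vertices. -/
theorem exists_nowhereEmpty_linear_sequence (r : ℕ) (hr : 3 ≤ r) :
    ∃ H : ℕ → RGraph r, (∀ n, (H n).verts.card = n) ∧
      (∀ n, LinearGraph (H n)) ∧ NowhereEmpty H := by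
  classical
  refine ⟨fun n => Hgraph r n, fun n => Finset.card_range n,
    fun n => Hgraph_linear r n, ?_⟩
  intro c hc
  set B₀ : ℕ := max 2 ⌈2/c⌉₊ with hB₀
  refine ⟨B₀ ^ (7*r), ?_⟩
  intro n hn S hSsub hSdisj hScard
  have hB2 : 2 ≤ B₀ := le_max_left _ _
  have hn2 : 2^(7*r) ≤ n :=
    le_trans (Nat.pow_le_pow_left hB2 _) hn
  have hBn : B₀ ≤ n := by
    calc B₀ = B₀^1 := (pow_one _).symm
      _ ≤ B₀^(7*r) := Nat.pow_le_pow_right (by omega) (by omega)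
      _ ≤ n := hn
  have hq : B₀ ≤ qpar r n := qpar_ge r n B₀ hn (by omega) (by omega)
  have hvc : (Hgraph r n).verts.card = n := Finset.card_range n
  -- kpar r n ≤ c * n
  have hkc : (kpar r n : ℝ) ≤ c * n := by
    have h1 : (n / qpar r n : ℕ) ≤ (n / B₀ : ℕ) :=
      Nat.div_le_div_left hq (by omega)
    have h2 : ((n / B₀ : ℕ) : ℝ) ≤ (n:ℝ) / B₀ := Nat.cast_div_le
    have hBc : 2 / c ≤ (B₀:ℝ) := by
      calc 2 / c ≤ (⌈2/c⌉₊ : ℝ) := Nat.le_ceil _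
        _ ≤ (B₀:ℝ) := by exact_mod_cast le_max_right 2 ⌈2/c⌉₊
    have hB0pos : (0:ℝ) < B₀ := by positivity
    have h3 : (n:ℝ) / B₀ ≤ (n:ℝ) * (c/2) := by
      rw [div_le_iff₀ hB0pos]
      have h2c : (0:ℝ) < 2/c := by positivity
      have h5 : (1:ℝ) ≤ c/2 * (B₀:ℝ) := by
        have h6 := mul_le_mul_of_nonneg_left hBc (le_of_lt (by positivity : (0:ℝ) < c/2))
        calc (1:ℝ) = c/2 * (2/c) := by field_simp
          _ ≤ c/2 * B₀ := h6
      nlinarith [h5, Nat.cast_nonneg (α := ℝ) n]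
    have h4 : (1:ℝ) ≤ (n:ℝ) * (c/2) := by
      have hcn : 2/c ≤ (n:ℝ) := by
        calc 2/c ≤ (B₀:ℝ) := hBc
          _ ≤ (n:ℝ) := by exact_mod_cast hBn
      rw [div_le_iff₀ hc] at hcn
      nlinarith
    have : (kpar r n : ℝ) = ((n / qpar r n : ℕ) : ℝ) + 1 := by
      rw [kpar]; push_cast; ring
    rw [this]
    calc ((n / qpar r n : ℕ) : ℝ) + 1 ≤ ((n / B₀ : ℕ) : ℝ) + 1 := by
          have : ((n / qpar r n : ℕ) : ℝ) ≤ ((n / B₀ : ℕ) : ℝ) := by exact_mod_cast h1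
          linarith
      _ ≤ (n:ℝ) * (c/2) + (n:ℝ) * (c/2) := by linarith [h2.trans h3]
      _ = c * n := by ring
  -- the chosen good list
  have hex : ∃ l : List (Fin r → Fin n), GoodL r n l := exists_goodL r n hr hn2
  have hedges : (Hgraph r n).edges = edgesOf hex.choose := dif_pos hex
  have hgood : GoodL r n hex.choose := hex.choose_spec
  -- transfer the sets to Fin n
  set S' : Fin r → Finset (Fin n) :=
    fun i => univ.filter (fun v : Fin n => (v : ℕ) ∈ S i) with hS'
  have hcard' : ∀ i, (S' i).card = (S i).card := by
    intro i
    refine Finset.card_bij (fun v _ => (v : ℕ)) ?_ ?_ ?_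
    · intro v hv
      simp only [hS', Finset.mem_filter] at hv
      exact hv.2
    · intro a ha b hb hab
      exact Fin.val_injective hab
    · intro a ha
      have : a < n := Finset.mem_range.1 (hSsub i ha)
      refine ⟨⟨a, this⟩, ?_, rfl⟩
      simp only [hS', Finset.mem_filter]
      exact ⟨mem_univ _, ha⟩
  have hS'card : ∀ i, kpar r n ≤ (S' i).card := by
    intro i
    have h1 : (kpar r n : ℝ) ≤ ((S i).card : ℝ) := by
      refine hkc.trans ?_
      have := hScard i
      rw [hvc] at this
      exact this
    rw [hcard']
    exact_mod_cast h1
  have hnotbad := hgood S' hS'card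
  obtain ⟨l₁, c₀, l₂, heq, hB⟩ := badList_not hnotbad
  obtain ⟨htrans, hconf⟩ := hB
  -- the transversal tuple is injective
  have hinj : Function.Injective (fun i => ((c₀ i : ℕ))) := by
    intro i j hij
    by_contra hne
    have hd := hSdisj i j hne
    have h1 : ((c₀ i : ℕ)) ∈ S i := by
      have := htrans i
      simp only [hS', Finset.mem_filter] at this
      exact this.2
    have h2 : ((c₀ i : ℕ)) ∈ S j := by
      have := htrans j
      simp only [hS', Finset.mem_filter] at this
      have hij' : ((c₀ i : ℕ)) = ((c₀ j : ℕ)) := hij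
      rw [hij']
      exact this.2
    exact (Finset.disjoint_left.1 hd) h1 h2
  have hFcard : (Fset c₀).card = r := by
    rw [show Fset c₀ = Finset.image (fun i => ((c₀ i : ℕ))) univ from rfl,
      Finset.card_image_of_injective _ hinj]
    simp
  refine ⟨Fset c₀, ?_, ?_⟩
  · rw [hedges, heq]
    exact mem_edgesOf_split l₁ l₂ c₀ hFcard hconf
  · intro i
    refine ⟨(c₀ i : ℕ), Finset.mem_inter.2 ⟨?_, ?_⟩⟩
    · exact Finset.mem_image.2 ⟨i, mem_univ _, rfl⟩
    · have := htrans i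
      simp only [hS', Finset.mem_filter] at this
      exact this.2

end UTD
end

section
/- Let r ≥ 3, let H be an r-graph whose vertex set carries a linear order, and suppose there is a function φ assigning to each pair of vertices of H a 2-element subset of [r] such that for every edge e of H and every pair of vertices {u,v} ⊆ e, the pair {u,v} plays the role φ({u,v}) in e. Then H contains no inconsistent quasi-linear r-graph as a subgraph. -/
namespace UTD

lemma role_comp_aux (ord ψ : ℕ → ℕ) (e p : Finset ℕ)
    (hinj : Set.InjOn ψ ↑e) :
    role (ord ∘ ψ) e p = role ord (e.image ψ) (p.image ψ) := by
  unfold role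
  rw [Finset.image_image]
  apply Finset.image_congr
  intro v _
  simp only [Function.comp]
  congr 1
  rw [Finset.filter_image]
  exact (Finset.card_image_of_injOn (hinj.mono (by
    exact_mod_cast Finset.filter_subset _ _))).symm

/-- if every pair of vertices of an ordered r-graph H plays a fixed
role `φ {u,v}` in every edge containing it, then H contains no inconsistent
quasi-linear r-graph as a subgraph. -/
theorem role_coloring_no_inconsistent_subgraph (r : ℕ) (hr : 3 ≤ r)
    (H : RGraph r) (ord : ℕ → ℕ) (hord : Set.InjOn ord ↑H.verts)
    (φ : ℕ → ℕ → Finset ℕ)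
    (hφ : ∀ u ∈ H.verts, ∀ v ∈ H.verts, u ≠ v →
      φ u v = φ v u ∧ φ u v ⊆ Finset.Icc 1 r ∧ (φ u v).card = 2)
    (hrole : ∀ e ∈ H.edges, ∀ u ∈ e, ∀ v ∈ e, u ≠ v → role ord e {u, v} = φ u v)
    (F : RGraph r) (hql : QuasiLinear F) (hinc : ¬ Consistent F) :
    ¬ IsSubgraph F H := by
  rintro ⟨ψ, hinj, hmap, hedge⟩
  apply hinc
  refine ⟨ord ∘ ψ, ?_, ?_⟩
  · intro a ha b hb h
    exact hinj ha hb (hord (hmap a ha) (hmap b hb) h)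
  · rintro e f ⟨he, hf, hne, hcard⟩
    obtain ⟨u, v, huv, hef⟩ := Finset.card_eq_two.mp hcard
    have heV : e ⊆ F.verts := F.edges_subset e he
    have hfV : f ⊆ F.verts := F.edges_subset f hf
    have hue : u ∈ e ∩ f := by rw [hef]; simp
    have hve : v ∈ e ∩ f := by rw [hef]; simp
    have huV : u ∈ F.verts := heV (Finset.mem_of_mem_inter_left hue)
    have hvV : v ∈ F.verts := heV (Finset.mem_of_mem_inter_left hve)
    have hψuv : ψ u ≠ ψ v := fun h => huv (hinj huV hvV h)
    have himg : (e ∩ f).image ψ = {ψ u, ψ v} := by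
      rw [hef]; simp [Finset.image_insert]
    have heH : e.image ψ ∈ H.edges := hedge e he
    have hfH : f.image ψ ∈ H.edges := hedge f hf
    have key : ∀ g ∈ F.edges, u ∈ g → v ∈ g →
        role (ord ∘ ψ) g (e ∩ f) = φ (ψ u) (ψ v) := by
      intro g hg hug hvg
      have hgV : g ⊆ F.verts := F.edges_subset g hg
      rw [role_comp_aux ord ψ g (e ∩ f) (hinj.mono (by exact_mod_cast hgV)),
        himg]
      exact hrole (g.image ψ) (hedge g hg) (ψ u) (Finset.mem_image_of_mem ψ hug)
        (ψ v) (Finset.mem_image_of_mem ψ hvg) hψuv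
    rw [key e he (Finset.mem_of_mem_inter_left hue) (Finset.mem_of_mem_inter_left hve),
      key f hf (Finset.mem_of_mem_inter_right hue) (Finset.mem_of_mem_inter_right hve)]

end UTD
end
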